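/- arXiv:1507.07459 — 7 statements merged into one kernel-verified Lean document; each statement's English description precedes it below -/
import Mathlib

section
/- Let G be a multigraph (loops and multiple edges allowed) on n vertices in which every vertex has degree at least 3. Then every vertex v belongs to a connected induced subgraph G[X] with |X| ≤ 4·log₂(n) − 1 vertices such that G[X] has strictly more edges than vertices. -/
set_option linter.unusedSectionVars false

namespace Stmt0Aux

open Finset SimpleGraph

variable {V ι : Type*} [Fintype V] [DecidableEq V] [Fintype ι]

def HG (ends : ι → V × V) : SimpleGraph V :=
  SimpleGraph.fromRel (fun a b => ∃ e, ends e = (a, b) ∨ ends e = (b, a))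

lemma hg_adj {ends : ι → V × V} {a b : V} :
    (HG ends).Adj a b ↔ a ≠ b ∧ ∃ e, ends e = (a, b) ∨ ends e = (b, a) := by
  constructor
  · rintro ⟨hne, ⟨e, he⟩ | ⟨e, he⟩⟩
    · exact ⟨hne, e, he⟩
    · exact ⟨hne, e, he.symm⟩
  · rintro ⟨hne, h⟩
    exact ⟨hne, Or.inl h⟩

variable (ends : ι → V × V) (v : V)

lemma adj_dist_le {a b : V} (h : (HG ends).Adj a b) (hra : (HG ends).Reachable v a) :
    (HG ends).Reachable v b ∧ (HG ends).dist v b ≤ (HG ends).dist v a + 1 := by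
  refine ⟨hra.trans h.reachable, ?_⟩
  obtain ⟨p, hp⟩ := hra.exists_walk_length_eq_dist
  have := SimpleGraph.dist_le (p.concat h)
  rwa [SimpleGraph.Walk.length_concat, hp] at this

lemma parent_exists {u : V} (hr : (HG ends).Reachable v u) (hne : u ≠ v) :
    ∃ w, (HG ends).Adj u w ∧ (HG ends).Reachable v w ∧
      (HG ends).dist v w + 1 = (HG ends).dist v u := by
  obtain ⟨p, hp⟩ := (hr.symm).exists_walk_length_eq_dist
  cases p with
  | nil => exact absurd rfl hne
  | @cons _ w _ h q =>
    have hrw : (HG ends).Reachable v w := hr.trans h.reachable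
    refine ⟨w, h, hrw, ?_⟩
    have h1 : (HG ends).dist v w ≤ q.length := by
      rw [SimpleGraph.dist_comm]; exact SimpleGraph.dist_le q
    have h2 : (HG ends).dist v u ≤ (HG ends).dist v w + 1 := by
      obtain ⟨p', hp'⟩ := hrw.exists_walk_length_eq_dist
      have := SimpleGraph.dist_le (p'.concat h.symm)
      rwa [SimpleGraph.Walk.length_concat, hp'] at this
    have h3 : q.length + 1 = (HG ends).dist u v := by simpa using hp
    rw [SimpleGraph.dist_comm (u := u)] at h3
    omega

open Classical in
noncomputable def par (u : V) : V :=
  if h : (HG ends).Reachable v u ∧ u ≠ v then (parent_exists ends v h.1 h.2).choose else v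

lemma par_spec {u : V} (hr : (HG ends).Reachable v u) (hne : u ≠ v) :
    (HG ends).Adj u (par ends v u) ∧ (HG ends).Reachable v (par ends v u) ∧
      (HG ends).dist v (par ends v u) + 1 = (HG ends).dist v u := by
  rw [par, dif_pos ⟨hr, hne⟩]
  exact (parent_exists ends v hr hne).choose_spec

open Classical in
noncomputable def tedge [Nonempty ι] (u : V) : ι :=
  if h : (HG ends).Reachable v u ∧ u ≠ v then
    ((hg_adj.mp (par_spec ends v h.1 h.2).1).2).choose
  else Classical.arbitrary ι

lemma tedge_spec [Nonempty ι] {u : V} (hr : (HG ends).Reachable v u) (hne : u ≠ v) :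
    ends (tedge ends v u) = (u, par ends v u) ∨
      ends (tedge ends v u) = (par ends v u, u) := by
  rw [tedge, dif_pos ⟨hr, hne⟩]
  exact ((hg_adj.mp (par_spec ends v hr hne).1).2).choose_spec

lemma par_dist {u : V} (hr : (HG ends).Reachable v u) (hne : u ≠ v) :
    (HG ends).dist v (par ends v u) + 1 = (HG ends).dist v u :=
  (par_spec ends v hr hne).2.2

lemma tedge_inj [Nonempty ι] {u u' : V}
    (hr : (HG ends).Reachable v u) (hne : u ≠ v)
    (hr' : (HG ends).Reachable v u') (hne' : u' ≠ v)
    (h : tedge ends v u = tedge ends v u') : u = u' := by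
  have d1 := par_dist ends v hr hne
  have d2 := par_dist ends v hr' hne'
  have s1 := tedge_spec ends v hr hne
  have s2 := tedge_spec ends v hr' hne'
  rw [h] at s1
  rcases s1 with s1 | s1 <;> rcases s2 with s2 | s2 <;>
      have := (s1.symm.trans s2) <;> rw [Prod.mk.injEq] at this
  · exact this.1
  · rw [← this.1] at d2; rw [this.2] at d1; omega
  · rw [this.1] at d1; rw [← this.2] at d2; omega
  · exact this.2

def IsTree [Nonempty ι] (e : ι) : Prop :=
  ∃ u, (HG ends).Reachable v u ∧ u ≠ v ∧ tedge ends v u = e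

open Classical in
noncomputable def tsrc [Nonempty ι] (e : ι) : V :=
  if h : IsTree ends v e then h.choose else v

lemma tsrc_spec [Nonempty ι] {e : ι} (h : IsTree ends v e) :
    (HG ends).Reachable v (tsrc ends v e) ∧ tsrc ends v e ≠ v ∧
      tedge ends v (tsrc ends v e) = e := by
  rw [tsrc, dif_pos h]
  exact h.choose_spec

lemma tsrc_endpoint [Nonempty ι] {e : ι} (h : IsTree ends v e) :
    ((ends e).1 = tsrc ends v e ∧ (ends e).2 = par ends v (tsrc ends v e)) ∨
      ((ends e).2 = tsrc ends v e ∧ (ends e).1 = par ends v (tsrc ends v e)) := by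
  obtain ⟨h1, h2, h3⟩ := tsrc_spec ends v h
  rcases tedge_spec ends v h1 h2 with hs | hs <;> rw [h3] at hs <;> rw [hs]
  · exact Or.inl ⟨rfl, rfl⟩
  · exact Or.inr ⟨rfl, rfl⟩

open Classical in
noncomputable def ball (r : ℕ) : Finset V :=
  Finset.univ.filter (fun u => (HG ends).Reachable v u ∧ (HG ends).dist v u ≤ r)

lemma mem_ball {u : V} {r : ℕ} :
    u ∈ ball ends v r ↔ (HG ends).Reachable v u ∧ (HG ends).dist v u ≤ r := by
  simp [ball]

lemma v_mem_ball (r : ℕ) : v ∈ ball ends v r := by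
  rw [mem_ball]
  exact ⟨SimpleGraph.Reachable.refl v, by simp [SimpleGraph.dist_self]⟩

lemma ball_mono {r r' : ℕ} (h : r ≤ r') : ball ends v r ⊆ ball ends v r' := by
  intro u hu
  rw [mem_ball] at hu ⊢
  exact ⟨hu.1, hu.2.trans h⟩

def ES (X : Finset V) : Finset ι :=
  Finset.univ.filter (fun e => (ends e).1 ∈ X ∧ (ends e).2 ∈ X)

def crossE (X : Finset V) : Finset ι :=
  Finset.univ.filter (fun e =>
    ((ends e).1 ∈ X ∧ ¬(ends e).2 ∈ X) ∨ (¬(ends e).1 ∈ X ∧ (ends e).2 ∈ X))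

def mdeg (u : V) : ℕ := ∑ e : ι, (if ends e = (u, u) then 2 else
  if (ends e).1 = u ∨ (ends e).2 = u then 1 else 0)

lemma sum_mdeg (X : Finset V) :
    ∑ u ∈ X, mdeg ends u =
      ∑ e : ι, ((if (ends e).1 ∈ X then 1 else 0) + (if (ends e).2 ∈ X then 1 else 0)) := by
  rw [show (∑ u ∈ X, mdeg ends u) = ∑ u ∈ X, ∑ e : ι, (if ends e = (u, u) then 2 else
    if (ends e).1 = u ∨ (ends e).2 = u then 1 else 0) from rfl, Finset.sum_comm]
  refine Finset.sum_congr rfl fun e _ => ?_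
  by_cases hl : (ends e).1 = (ends e).2
  · have hcond : ∀ u : V, (ends e = (u, u)) ↔ u = (ends e).1 := by
      intro u
      constructor
      · intro h; rw [h]
      · intro h; subst h; rw [Prod.mk.injEq]; exact ⟨rfl, hl.symm⟩
    have : ∀ u : V, (if ends e = (u, u) then 2 else
        if (ends e).1 = u ∨ (ends e).2 = u then 1 else 0) =
        (if u = (ends e).1 then 2 else 0) := by
      intro u
      by_cases h : u = (ends e).1
      · rw [if_pos ((hcond u).mpr h), if_pos h]
      · rw [if_neg (fun hc => h ((hcond u).mp hc)), if_neg, if_neg h]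
        rw [← hl]
        push_neg
        exact ⟨fun hc => h hc.symm, fun hc => h hc.symm⟩
    rw [Finset.sum_congr rfl (fun u _ => this u), Finset.sum_ite_eq' X ((ends e).1) (fun _ => 2)]
    rw [← hl]
    by_cases h : (ends e).1 ∈ X <;> simp [h]
  · have : ∀ u : V, (if ends e = (u, u) then 2 else
        if (ends e).1 = u ∨ (ends e).2 = u then 1 else 0) =
        ((if u = (ends e).1 then 1 else 0) + (if u = (ends e).2 then 1 else 0)) := by
      intro u
      have hne : ¬ ends e = (u, u) := by
        intro h
        rw [h] at hl; exact hl rfl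
      rw [if_neg hne]
      by_cases h1 : u = (ends e).1 <;> by_cases h2 : u = (ends e).2
      · exact absurd (h1 ▸ h2 : (ends e).1 = (ends e).2).symm (fun h => hl h.symm)
      · rw [if_pos (Or.inl h1.symm), if_pos h1, if_neg h2]
      · rw [if_pos (Or.inr h2.symm), if_neg h1, if_pos h2]
      · rw [if_neg, if_neg h1, if_neg h2]
        push_neg
        exact ⟨fun hc => h1 hc.symm, fun hc => h2 hc.symm⟩
    rw [Finset.sum_congr rfl (fun u _ => this u), Finset.sum_add_distrib,
      Finset.sum_ite_eq' X ((ends e).1) (fun _ => 1),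
      Finset.sum_ite_eq' X ((ends e).2) (fun _ => 1)]

lemma slot_eq (X : Finset V) (e : ι) :
    ((if (ends e).1 ∈ X then 1 else 0) + (if (ends e).2 ∈ X then 1 else 0) : ℕ)
      = 2 * (if (ends e).1 ∈ X ∧ (ends e).2 ∈ X then 1 else 0) +
        (if ((ends e).1 ∈ X ∧ ¬(ends e).2 ∈ X) ∨ (¬(ends e).1 ∈ X ∧ (ends e).2 ∈ X)
          then 1 else 0) := by
  by_cases hx : (ends e).1 ∈ X <;> by_cases hy : (ends e).2 ∈ X <;> simp [hx, hy]

lemma card_ES (X : Finset V) :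
    ∑ e : ι, (if (ends e).1 ∈ X ∧ (ends e).2 ∈ X then 1 else 0) = (ES ends X).card := by
  rw [ES, Finset.card_filter]

lemma card_crossE (X : Finset V) :
    ∑ e : ι, (if ((ends e).1 ∈ X ∧ ¬(ends e).2 ∈ X) ∨ (¬(ends e).1 ∈ X ∧ (ends e).2 ∈ X)
      then 1 else 0) = (crossE ends X).card := by
  rw [crossE, Finset.card_filter]

lemma slot_le_two (X : Finset V) (e : ι) :
    ((if (ends e).1 ∈ X then 1 else 0) + (if (ends e).2 ∈ X then 1 else 0) : ℕ) ≤ 2 := by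
  by_cases hx : (ends e).1 ∈ X <;> by_cases hy : (ends e).2 ∈ X <;> simp [hx, hy]

lemma par_mem_ball {u : V} {r : ℕ} (hu : u ∈ ball ends v r) (hne : u ≠ v) :
    par ends v u ∈ ball ends v r := by
  rw [mem_ball] at hu ⊢
  obtain ⟨hadj, hrp, hdp⟩ := par_spec ends v hu.1 hne
  exact ⟨hrp, by omega⟩

lemma growth [Nonempty ι] (hdeg : ∀ u, 3 ≤ mdeg ends u) (r : ℕ) (S : Finset ι)
    (hT : ∀ e, e ∉ S → ((ends e).1 ∈ ball ends v r ∨ (ends e).2 ∈ ball ends v r) →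
      IsTree ends v e) :
    2 * (ball ends v r).card + 2 ≤ (ball ends v (r + 1)).card + 2 * S.card := by
  classical
  set X := ball ends v r with hX
  -- degree sum lower bound
  have hsum : X.card * 3 ≤ ∑ u ∈ X, mdeg ends u := by
    simpa using Finset.card_nsmul_le_sum X (mdeg ends) 3 (fun u _ => hdeg u)
  rw [sum_mdeg] at hsum
  -- split the sum over S and its complement
  have hsplit : ∑ e : ι, ((if (ends e).1 ∈ X then 1 else 0) +
      (if (ends e).2 ∈ X then 1 else 0)) =
      ∑ e ∈ Finset.univ \ S, ((if (ends e).1 ∈ X then 1 else 0) +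
        (if (ends e).2 ∈ X then 1 else 0)) +
      ∑ e ∈ S, ((if (ends e).1 ∈ X then 1 else 0) + (if (ends e).2 ∈ X then 1 else 0)) := by
    rw [Finset.sum_sdiff (Finset.subset_univ S)]
  have hSbound : ∑ e ∈ S, ((if (ends e).1 ∈ X then 1 else 0) +
      (if (ends e).2 ∈ X then 1 else 0)) ≤ S.card * 2 := by
    simpa using Finset.sum_le_card_nsmul S _ 2 (fun e _ => slot_le_two ends X e)
  have hrest : ∑ e ∈ Finset.univ \ S, ((if (ends e).1 ∈ X then 1 else 0) +
      (if (ends e).2 ∈ X then 1 else 0)) =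
      2 * (ES ends X \ S).card + (crossE ends X \ S).card := by
    calc ∑ e ∈ Finset.univ \ S, ((if (ends e).1 ∈ X then 1 else 0) +
        (if (ends e).2 ∈ X then 1 else 0))
        = ∑ e ∈ Finset.univ \ S, (2 * (if (ends e).1 ∈ X ∧ (ends e).2 ∈ X then 1 else 0) +
          (if ((ends e).1 ∈ X ∧ ¬(ends e).2 ∈ X) ∨ (¬(ends e).1 ∈ X ∧ (ends e).2 ∈ X)
            then 1 else 0)) := Finset.sum_congr rfl (fun e _ => slot_eq ends X e)
      _ = 2 * ∑ e ∈ Finset.univ \ S, (if (ends e).1 ∈ X ∧ (ends e).2 ∈ X then 1 else 0) +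
          ∑ e ∈ Finset.univ \ S,
            (if ((ends e).1 ∈ X ∧ ¬(ends e).2 ∈ X) ∨ (¬(ends e).1 ∈ X ∧ (ends e).2 ∈ X)
              then 1 else 0) := by
          rw [Finset.sum_add_distrib, Finset.mul_sum]
      _ = 2 * (ES ends X \ S).card + (crossE ends X \ S).card := by
          rw [← Finset.card_filter, ← Finset.card_filter]
          have e1 : (Finset.univ \ S).filter
              (fun e => (ends e).1 ∈ X ∧ (ends e).2 ∈ X) = ES ends X \ S := by
            rw [ES]
            ext e
            simp only [Finset.mem_filter, Finset.mem_sdiff, Finset.mem_univ, true_and]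
            tauto
          have e2 : (Finset.univ \ S).filter
              (fun e => ((ends e).1 ∈ X ∧ ¬(ends e).2 ∈ X) ∨
                (¬(ends e).1 ∈ X ∧ (ends e).2 ∈ X)) = crossE ends X \ S := by
            rw [crossE]
            ext e
            simp only [Finset.mem_filter, Finset.mem_sdiff, Finset.mem_univ, true_and]
            tauto
          rw [e1, e2]
  -- tree edges inside the ball
  have hES : (ES ends X \ S).card + 1 ≤ X.card := by
    have hmap : ∀ e ∈ ES ends X \ S, tsrc ends v e ∈ X.erase v := by
      intro e he
      rw [Finset.mem_sdiff] at he
      have hin : (ends e).1 ∈ X ∧ (ends e).2 ∈ X := by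
        have := he.1
        rw [ES, Finset.mem_filter] at this
        exact this.2
      have htree := hT e he.2 (Or.inl hin.1)
      obtain ⟨hru, hneu, hteu⟩ := tsrc_spec ends v htree
      rcases tsrc_endpoint ends v htree with ⟨h1, _⟩ | ⟨h1, _⟩
      · exact Finset.mem_erase.mpr ⟨hneu, h1 ▸ hin.1⟩
      · exact Finset.mem_erase.mpr ⟨hneu, h1 ▸ hin.2⟩
    have hinj : Set.InjOn (tsrc ends v) ↑(ES ends X \ S) := by
      intro e he e' he' hee
      rw [Finset.mem_coe, Finset.mem_sdiff] at he he'
      have t1 := (tsrc_spec ends v (hT e he.2 (Or.inl (by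
        have := he.1; rw [ES, Finset.mem_filter] at this; exact this.2.1)))).2.2
      have t2 := (tsrc_spec ends v (hT e' he'.2 (Or.inl (by
        have := he'.1; rw [ES, Finset.mem_filter] at this; exact this.2.1)))).2.2
      rw [← t1, ← t2, hee]
    have hcard := Finset.card_le_card_of_injOn (tsrc ends v) hmap hinj
    have herase : (X.erase v).card = X.card - 1 := Finset.card_erase_of_mem (v_mem_ball ends v r)
    have hpos : 1 ≤ X.card := Finset.card_pos.mpr ⟨v, v_mem_ball ends v r⟩
    omega
  -- cross edges inject into the next shell
  have hcross : (crossE ends X \ S).card + X.card ≤ (ball ends v (r + 1)).card := by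
    have hmap : ∀ e ∈ crossE ends X \ S,
        tsrc ends v e ∈ ball ends v (r + 1) \ X := by
      intro e he
      rw [Finset.mem_sdiff] at he
      have hcr : ((ends e).1 ∈ X ∧ ¬(ends e).2 ∈ X) ∨ (¬(ends e).1 ∈ X ∧ (ends e).2 ∈ X) := by
        have := he.1
        rw [crossE, Finset.mem_filter] at this
        exact this.2
      have htree := hT e he.2 (by tauto)
      obtain ⟨hru, hneu, hteu⟩ := tsrc_spec ends v htree
      set u := tsrc ends v e with hu
      have hnotin : u ∉ X := by
        intro huin
        have hpu : par ends v u ∈ X := par_mem_ball ends v huin hneu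
        rcases tsrc_endpoint ends v htree with ⟨h1, h2⟩ | ⟨h1, h2⟩ <;>
          rw [← hu] at h1 h2 <;> rw [h1] at hcr <;> rw [h2] at hcr <;> tauto
      have hpin : par ends v u ∈ X := by
        rcases tsrc_endpoint ends v htree with ⟨h1, h2⟩ | ⟨h1, h2⟩ <;>
          rw [← hu] at h1 h2 <;> rw [h1] at hcr <;> rw [h2] at hcr <;> tauto
      rw [Finset.mem_sdiff]
      refine ⟨?_, hnotin⟩
      rw [mem_ball]
      rw [hX, mem_ball] at hpin
      have hdp := par_dist ends v hru hneu
      exact ⟨hru, by omega⟩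
    have hinj : Set.InjOn (tsrc ends v) ↑(crossE ends X \ S) := by
      intro e he e' he' hee
      rw [Finset.mem_coe, Finset.mem_sdiff] at he he'
      have hcr : ((ends e).1 ∈ X ∧ ¬(ends e).2 ∈ X) ∨ (¬(ends e).1 ∈ X ∧ (ends e).2 ∈ X) := by
        have := he.1; rw [crossE, Finset.mem_filter] at this; exact this.2
      have hcr' : ((ends e').1 ∈ X ∧ ¬(ends e').2 ∈ X) ∨
          (¬(ends e').1 ∈ X ∧ (ends e').2 ∈ X) := by
        have := he'.1; rw [crossE, Finset.mem_filter] at this; exact this.2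
      have t1 := (tsrc_spec ends v (hT e he.2 (by tauto))).2.2
      have t2 := (tsrc_spec ends v (hT e' he'.2 (by tauto))).2.2
      rw [← t1, ← t2, hee]
    have hcard := Finset.card_le_card_of_injOn (tsrc ends v) hmap hinj
    have hsub : X ⊆ ball ends v (r + 1) := ball_mono ends v (Nat.le_succ r)
    have := Finset.card_sdiff_of_subset hsub
    have := Finset.card_le_card hsub
    omega
  omega

lemma sum_slot (X : Finset V) :
    ∑ u ∈ X, mdeg ends u = 2 * (ES ends X).card + (crossE ends X).card := by
  rw [sum_mdeg, ← card_ES, ← card_crossE, Finset.mul_sum, ← Finset.sum_add_distrib]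
  exact Finset.sum_congr rfl fun e _ => slot_eq ends X e

open Classical in
noncomputable def comp : Finset V :=
  Finset.univ.filter (fun u => (HG ends).Reachable v u)

lemma mem_comp {u : V} : u ∈ comp ends v ↔ (HG ends).Reachable v u := by simp [comp]

lemma v_mem_comp : v ∈ comp ends v := (mem_comp ends v).mpr (SimpleGraph.Reachable.refl v)

lemma reach_snd_of_fst {e : ι} (h : (HG ends).Reachable v (ends e).1) :
    (HG ends).Reachable v (ends e).2 := by
  by_cases heq : (ends e).1 = (ends e).2
  · exact heq ▸ h
  · exact (adj_dist_le ends v (hg_adj.mpr ⟨heq, e, Or.inl rfl⟩) h).1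

lemma reach_fst_of_snd {e : ι} (h : (HG ends).Reachable v (ends e).2) :
    (HG ends).Reachable v (ends e).1 := by
  by_cases heq : (ends e).1 = (ends e).2
  · exact heq ▸ h
  · exact (adj_dist_le ends v (hg_adj.mpr ⟨fun hc => heq hc.symm, e, Or.inr rfl⟩) h).1

lemma cross_comp : crossE ends (comp ends v) = ∅ := by
  rw [crossE]
  ext e
  simp only [Finset.mem_filter, Finset.mem_univ, true_and, Finset.notMem_empty, iff_false,
    mem_comp]
  rintro (⟨h1, h2⟩ | ⟨h1, h2⟩)
  · exact h2 (reach_snd_of_fst ends v h1)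
  · exact h1 (reach_fst_of_snd ends v h2)

lemma comp_count (hdeg : ∀ u, 3 ≤ mdeg ends u) :
    (comp ends v).card < (ES ends (comp ends v)).card := by
  have hsum : (comp ends v).card * 3 ≤ ∑ u ∈ comp ends v, mdeg ends u := by
    simpa using Finset.card_nsmul_le_sum (comp ends v) (mdeg ends) 3 (fun u _ => hdeg u)
  rw [sum_slot, cross_comp] at hsum
  simp only [Finset.card_empty, add_zero] at hsum
  have hpos : 1 ≤ (comp ends v).card := Finset.card_pos.mpr ⟨v, v_mem_comp ends v⟩
  omega

open Classical in
lemma tree_filter_card [Nonempty ι] (X : Finset V) (hv : v ∈ X) :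
    ((ES ends X).filter (fun e => IsTree ends v e)).card + 1 ≤ X.card := by
  classical
  have hmap : ∀ e ∈ (ES ends X).filter (fun e => IsTree ends v e), tsrc ends v e ∈ X.erase v := by
    intro e he
    rw [Finset.mem_filter] at he
    have hin : (ends e).1 ∈ X ∧ (ends e).2 ∈ X := by
      have := he.1
      rw [ES, Finset.mem_filter] at this
      exact this.2
    obtain ⟨hru, hneu, hteu⟩ := tsrc_spec ends v he.2
    rcases tsrc_endpoint ends v he.2 with ⟨h1, _⟩ | ⟨h1, _⟩
    · exact Finset.mem_erase.mpr ⟨hneu, h1 ▸ hin.1⟩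
    · exact Finset.mem_erase.mpr ⟨hneu, h1 ▸ hin.2⟩
  have hinj : Set.InjOn (tsrc ends v) ↑((ES ends X).filter (fun e => IsTree ends v e)) := by
    intro e he e' he' hee
    rw [Finset.mem_coe, Finset.mem_filter] at he he'
    have t1 := (tsrc_spec ends v he.2).2.2
    have t2 := (tsrc_spec ends v he'.2).2.2
    rw [← t1, ← t2, hee]
  have hcard := Finset.card_le_card_of_injOn (tsrc ends v) hmap hinj
  have herase : (X.erase v).card = X.card - 1 := Finset.card_erase_of_mem hv
  have hpos : 1 ≤ X.card := Finset.card_pos.mpr ⟨v, hv⟩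
  omega

lemma tree_lower [Nonempty ι] (X : Finset V) (hv : v ∈ X)
    (hre : ∀ u ∈ X, (HG ends).Reachable v u)
    (hcl : ∀ u ∈ X, u ≠ v → par ends v u ∈ X)
    {f₁ f₂ : ι} (h12 : f₁ ≠ f₂)
    (hf₁ : f₁ ∈ ES ends X) (hf₂ : f₂ ∈ ES ends X)
    (ht₁ : ¬ IsTree ends v f₁) (ht₂ : ¬ IsTree ends v f₂) :
    X.card < (ES ends X).card := by
  classical
  set T := (X.erase v).image (tedge ends v) with hT
  have hTsub : T ⊆ ES ends X := by
    intro e he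
    rw [hT, Finset.mem_image] at he
    obtain ⟨u, hu, heq⟩ := he
    rw [Finset.mem_erase] at hu
    have hru := hre u hu.2
    have hpu := hcl u hu.2 hu.1
    rw [ES, Finset.mem_filter]
    refine ⟨Finset.mem_univ e, ?_⟩
    rcases tedge_spec ends v hru hu.1 with hs | hs <;> rw [heq] at hs <;> rw [hs]
    · exact ⟨hu.2, hpu⟩
    · exact ⟨hpu, hu.2⟩
  have hTcard : T.card = X.card - 1 := by
    rw [hT, Finset.card_image_of_injOn, Finset.card_erase_of_mem hv]
    intro u hu u' hu' hee
    rw [Finset.mem_coe, Finset.mem_erase] at hu hu'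
    exact tedge_inj ends v (hre u hu.2) hu.1 (hre u' hu'.2) hu'.1 hee
  have hnottree : ∀ f : ι, ¬ IsTree ends v f → f ∉ T := by
    intro f hf hmem
    rw [hT, Finset.mem_image] at hmem
    obtain ⟨u, hu, heq⟩ := hmem
    rw [Finset.mem_erase] at hu
    exact hf ⟨u, hre u hu.2, hu.1, heq⟩
  have h1 : f₁ ∉ T := hnottree f₁ ht₁
  have h2 : f₂ ∉ T := hnottree f₂ ht₂
  have hins : insert f₁ (insert f₂ T) ⊆ ES ends X := by
    intro e he
    rcases Finset.mem_insert.mp he with rfl | he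
    · exact hf₁
    · rcases Finset.mem_insert.mp he with rfl | he
      · exact hf₂
      · exact hTsub he
  have hcard : (insert f₁ (insert f₂ T)).card = T.card + 2 := by
    rw [Finset.card_insert_of_notMem (by
      rw [Finset.mem_insert]; push_neg; exact ⟨h12, h1⟩),
      Finset.card_insert_of_notMem h2]
  have := Finset.card_le_card hins
  have hpos : 1 ≤ X.card := Finset.card_pos.mpr ⟨v, hv⟩
  omega

lemma conn_lemma [Nonempty ι] (X : Finset V) (hv : v ∈ X)
    (hre : ∀ u ∈ X, (HG ends).Reachable v u)
    (hcl : ∀ u ∈ X, u ≠ v → par ends v u ∈ X) :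
    (SimpleGraph.fromRel (fun a b : {x // x ∈ X} =>
      ∃ e : ι, ends e = (a.1, b.1) ∨ ends e = (b.1, a.1))).Connected := by
  set G' := SimpleGraph.fromRel (fun a b : {x // x ∈ X} =>
      ∃ e : ι, ends e = (a.1, b.1) ∨ ends e = (b.1, a.1)) with hG'
  have key : ∀ k (u : V) (hu : u ∈ X), (HG ends).dist v u ≤ k →
      G'.Reachable ⟨u, hu⟩ ⟨v, hv⟩ := by
    intro k
    induction k with
    | zero =>
      intro u hu h0
      have hr := hre u hu
      have : u = v := ((hr.dist_eq_zero_iff).mp (Nat.le_zero.mp h0)).symm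
      subst this
      rfl
    | succ k ih =>
      intro u hu hk
      by_cases huv : u = v
      · subst huv
        rfl
      · have hr := hre u hu
        obtain ⟨hadj, hrp, hdp⟩ := par_spec ends v hr huv
        have hpX := hcl u hu huv
        have hpos : 0 < (HG ends).dist v u := hr.pos_dist_of_ne (fun hc => huv hc.symm)
        have hdpar : (HG ends).dist v (par ends v u) ≤ k := by omega
        have hne2 : u ≠ par ends v u := by
          intro hc
          rw [← hc] at hdp
          omega
        have hadj' : G'.Adj ⟨u, hu⟩ ⟨par ends v u, hpX⟩ := by
          rw [hG', SimpleGraph.fromRel_adj]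
          refine ⟨fun hc => hne2 (by rwa [Subtype.mk.injEq] at hc), Or.inl ?_⟩
          rcases tedge_spec ends v hr huv with hs | hs
          · exact ⟨tedge ends v u, Or.inl hs⟩
          · exact ⟨tedge ends v u, Or.inr hs⟩
        exact hadj'.reachable.trans (ih (par ends v u) hpX hdpar)
  haveI : Nonempty { x // x ∈ X } := ⟨⟨v, hv⟩⟩
  refine ⟨fun a b => ?_⟩
  exact (key ((HG ends).dist v a.1) a.1 a.2 le_rfl).trans
    (key ((HG ends).dist v b.1) b.1 b.2 le_rfl).symm

noncomputable def anc (u : V) : ℕ → V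
  | 0 => u
  | (k+1) => par ends v (anc u k)

lemma anc_spec {u : V} (hr : (HG ends).Reachable v u) :
    ∀ k, k ≤ (HG ends).dist v u →
      (HG ends).Reachable v (anc ends v u k) ∧
        (HG ends).dist v (anc ends v u k) + k = (HG ends).dist v u := by
  intro k
  induction k with
  | zero => intro _; exact ⟨hr, rfl⟩
  | succ k ih =>
    intro hk
    obtain ⟨hrw, hdw⟩ := ih (by omega)
    have hwne : anc ends v u k ≠ v := by
      intro hc
      rw [hc, SimpleGraph.dist_self] at hdw
      omega
    obtain ⟨_, hrp, hdp⟩ := par_spec ends v hrw hwne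
    exact ⟨hrp, by simpa [anc] using (by omega :
      (HG ends).dist v (par ends v (anc ends v u k)) + (k + 1) = (HG ends).dist v u)⟩

lemma anc_last {u : V} (hr : (HG ends).Reachable v u) :
    anc ends v u ((HG ends).dist v u) = v := by
  obtain ⟨hrw, hdw⟩ := anc_spec ends v hr ((HG ends).dist v u) le_rfl
  have : (HG ends).dist v (anc ends v u ((HG ends).dist v u)) = 0 := by omega
  exact ((hrw.dist_eq_zero_iff).mp this).symm

noncomputable def pset (u : V) : Finset V :=
  (Finset.range ((HG ends).dist v u)).image (anc ends v u)

lemma pset_card (u : V) : (pset ends v u).card ≤ (HG ends).dist v u :=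
  le_trans Finset.card_image_le (by simp)

lemma mem_pset_self {u : V} (hr : (HG ends).Reachable v u) (hne : u ≠ v) :
    u ∈ pset ends v u := by
  rw [pset, Finset.mem_image]
  exact ⟨0, Finset.mem_range.mpr (hr.pos_dist_of_ne (fun hc => hne hc.symm)), rfl⟩

lemma pset_reach {u x : V} (hr : (HG ends).Reachable v u) (hx : x ∈ pset ends v u) :
    (HG ends).Reachable v x := by
  rw [pset, Finset.mem_image] at hx
  obtain ⟨k, hk, rfl⟩ := hx
  exact (anc_spec ends v hr k (le_of_lt (Finset.mem_range.mp hk))).1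

lemma pset_par {u x : V} (hr : (HG ends).Reachable v u) (hx : x ∈ pset ends v u) :
    par ends v x ∈ insert v (pset ends v u) := by
  rw [pset, Finset.mem_image] at hx
  obtain ⟨k, hk, rfl⟩ := hx
  rw [Finset.mem_range] at hk
  by_cases hlast : k + 1 = (HG ends).dist v u
  · have : par ends v (anc ends v u k) = anc ends v u (k+1) := rfl
    rw [this, hlast, anc_last ends v hr]
    exact Finset.mem_insert_self v _
  · refine Finset.mem_insert_of_mem ?_
    rw [pset, Finset.mem_image]
    exact ⟨k + 1, Finset.mem_range.mpr (by omega), rfl⟩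

lemma arith {r₁ r₂ A B n c : ℕ} (hA : 3 * 2 ^ r₁ ≤ A + 2) (hAB : 2 ^ (r₂ - r₁) * A ≤ B)
    (hBn : B ≤ n) (hAn : A ≤ n) (h12 : r₁ ≤ r₂) (hn4 : 4 ≤ n)
    (hc : c + 1 ≤ 2 * r₁ + 2 * r₂ + 4) (hc0 : r₁ = 0 → c + 1 ≤ 2 * r₂ + 4) :
    2 ^ (c + 1) ≤ n ^ 4 := by
  rcases Nat.eq_zero_or_pos r₁ with h0 | hpos
  · subst h0
    rw [Nat.sub_zero] at hAB
    have hApos : 1 ≤ A := by omega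
    have hB : 2 ^ r₂ ≤ n := le_trans (le_trans (Nat.le_mul_of_pos_right _ hApos) hAB) hBn
    calc 2 ^ (c + 1) ≤ 2 ^ (2 * r₂ + 4) := Nat.pow_le_pow_right (by norm_num) (hc0 rfl)
      _ = 2 ^ r₂ * 2 ^ r₂ * 16 := by
          rw [show 2 * r₂ + 4 = r₂ + r₂ + 4 by ring, pow_add, pow_add]
          norm_num
      _ ≤ n * n * (n * n) := by
          have h16 : 16 ≤ n * n := by nlinarith
          exact Nat.mul_le_mul (Nat.mul_le_mul hB hB) h16
      _ = n ^ 4 := by ring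
  · have hx : 2 ≤ 2 ^ r₁ := by
      have : 2 ^ 1 ≤ 2 ^ r₁ := Nat.pow_le_pow_right (by norm_num) hpos
      simpa using this
    have hA1 : 2 ^ (r₁ + 1) ≤ A := by
      rw [pow_succ]
      omega
    have hB1 : 2 ^ (r₂ + 1) ≤ B := by
      have heq : (2:ℕ) ^ (r₂ + 1) = 2 ^ (r₂ - r₁) * 2 ^ (r₁ + 1) := by
        rw [← pow_add]
        congr 1
        omega
      rw [heq]
      exact le_trans (Nat.mul_le_mul_left _ hA1) hAB
    have hAn' : 2 ^ (r₁ + 1) ≤ n := hA1.trans hAn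
    have hBn' : 2 ^ (r₂ + 1) ≤ n := hB1.trans hBn
    calc 2 ^ (c + 1) ≤ 2 ^ (2 * r₁ + 2 * r₂ + 4) := Nat.pow_le_pow_right (by norm_num) hc
      _ = 2 ^ (r₁ + 1) * 2 ^ (r₂ + 1) * (2 ^ (r₁ + 1) * 2 ^ (r₂ + 1)) := by
          rw [show 2 * r₁ + 2 * r₂ + 4 = (r₁ + 1) + (r₂ + 1) + ((r₁ + 1) + (r₂ + 1)) by ring,
            pow_add, pow_add, pow_add]
      _ ≤ n * n * (n * n) :=
          Nat.mul_le_mul (Nat.mul_le_mul hAn' hBn') (Nat.mul_le_mul hAn' hBn')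
      _ = n ^ 4 := by ring

lemma to_real {c n : ℕ} (hn : 2 ≤ n) (h : 2 ^ (c + 1) ≤ n ^ 4) :
    (c : ℝ) ≤ 4 * Real.logb 2 n - 1 := by
  have h2 : ((2 : ℝ)) ^ (c + 1) ≤ (n : ℝ) ^ 4 := by exact_mod_cast h
  have hlog := Real.logb_le_logb_of_le (b := 2) one_lt_two (by positivity) h2
  rw [Real.logb_pow, Real.logb_pow, Real.logb_self_eq_one (by norm_num)] at hlog
  push_cast at hlog
  linarith

end Stmt0Aux

open Stmt0Aux in
/-- A multigraph is encoded by an edge-index type `ι` and an endpoint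
map `ends : ι → V × V` (loops and parallel edges allowed; a loop contributes 2 to the
degree).  If every vertex has degree at least 3, then every vertex `v` belongs to a
connected induced subgraph `G[X]` with `|X| ≤ 4·log₂ n − 1` having strictly more edges
than vertices. -/
theorem stmt_0 {V ι : Type*} [Fintype V] [DecidableEq V] [Fintype ι]
    (ends : ι → V × V) (n : ℕ) (hn : n = Fintype.card V) (hn2 : 2 ≤ n)
    (hdeg : ∀ v : V, 3 ≤ ∑ e : ι, (if ends e = (v, v) then 2 else
      if (ends e).1 = v ∨ (ends e).2 = v then 1 else 0))
    (v : V) :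
    ∃ X : Finset V, v ∈ X ∧
      (X.card : ℝ) ≤ 4 * Real.logb 2 n - 1 ∧
      (SimpleGraph.fromRel (fun a b : {x // x ∈ X} =>
        ∃ e : ι, ends e = (a.1, b.1) ∨ ends e = (b.1, a.1))).Connected ∧
      X.card < (Finset.univ.filter (fun e : ι => (ends e).1 ∈ X ∧ (ends e).2 ∈ X)).card := by
  classical
  have hι : Nonempty ι := by
    by_contra h
    rw [not_nonempty_iff] at h
    have h0 := hdeg v
    rw [Finset.univ_eq_empty, Finset.sum_empty] at h0
    omega
  have hdeg' : ∀ u, 3 ≤ mdeg ends u := hdeg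
  have hcount := comp_count ends v hdeg'
  -- basic facts about the component
  have hvC : v ∈ comp ends v := v_mem_comp ends v
  have hreC : ∀ u ∈ comp ends v, (HG ends).Reachable v u := fun u hu => (mem_comp ends v).mp hu
  have hclC : ∀ u ∈ comp ends v, u ≠ v → par ends v u ∈ comp ends v := by
    intro u hu hne
    exact (mem_comp ends v).mpr (par_spec ends v (hreC u hu) hne).2.1
  have hcardV : ∀ X : Finset V, X.card ≤ n := by
    intro X
    rw [hn, ← Finset.card_univ]
    exact Finset.card_le_card (Finset.subset_univ X)
  by_cases hsmall : n ≤ 3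
  · -- small case: take the whole component
    refine ⟨comp ends v, hvC, ?_, conn_lemma ends v _ hvC hreC hclC, hcount⟩
    have hC3 : (comp ends v).card ≤ 3 := le_trans (hcardV _) hsmall
    have hlog : (1 : ℝ) ≤ Real.logb 2 n := by
      rw [← Real.logb_self_eq_one (b := 2) (by norm_num)]
      exact Real.logb_le_logb_of_le one_lt_two (by norm_num) (by exact_mod_cast hn2)
    have : ((comp ends v).card : ℝ) ≤ 3 := by exact_mod_cast hC3
    linarith
  · have hn4 : 4 ≤ n := by omega
    -- the set of non-tree edges of the component
    set NT : Finset ι := (ES ends (comp ends v)).filter (fun e => ¬ IsTree ends v e) with hNT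
    have hNT2 : 2 ≤ NT.card := by
      have hsplit := Finset.card_filter_add_card_filter_not
        (s := ES ends (comp ends v)) (p := fun e => IsTree ends v e)
      have htc := tree_filter_card ends v (comp ends v) hvC
      rw [hNT]
      omega
    -- NT members are in the component's edge set
    have hNTmem : ∀ e ∈ NT, ((ends e).1 ∈ comp ends v ∧ (ends e).2 ∈ comp ends v)
        ∧ ¬ IsTree ends v e := by
      intro e he
      rw [hNT, Finset.mem_filter] at he
      refine ⟨?_, he.2⟩
      have := he.1
      rw [ES, Finset.mem_filter] at this
      exact this.2
    -- choose the two shallowest non-tree edges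
    set m : ι → ℕ := fun e => min ((HG ends).dist v (ends e).1) ((HG ends).dist v (ends e).2)
      with hm
    obtain ⟨f₁, hf₁, hmin₁⟩ := Finset.exists_min_image NT m (Finset.card_pos.mp (by omega))
    have herase : (NT.erase f₁).Nonempty := by
      rw [← Finset.card_pos, Finset.card_erase_of_mem hf₁]
      omega
    obtain ⟨f₂, hf₂e, hmin₂⟩ := Finset.exists_min_image (NT.erase f₁) m herase
    have hf₂ : f₂ ∈ NT := Finset.mem_of_mem_erase hf₂e
    have hne12 : f₂ ≠ f₁ := Finset.ne_of_mem_erase hf₂e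
    set r₁ := m f₁ with hr₁
    set r₂ := m f₂ with hr₂
    have h12 : r₁ ≤ r₂ := hmin₁ f₂ hf₂
    -- every shallow edge is a tree edge
    have hT1 : ∀ r, r < r₁ → ∀ e, e ∉ (∅ : Finset ι) →
        ((ends e).1 ∈ ball ends v r ∨ (ends e).2 ∈ ball ends v r) → IsTree ends v e := by
      intro r hr e _ hball
      by_contra htre
      have heC : (ends e).1 ∈ comp ends v ∧ (ends e).2 ∈ comp ends v := by
        rcases hball with hb | hb <;> rw [mem_ball] at hb
        · exact ⟨(mem_comp ends v).mpr hb.1,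
            (mem_comp ends v).mpr (reach_snd_of_fst ends v hb.1)⟩
        · exact ⟨(mem_comp ends v).mpr (reach_fst_of_snd ends v hb.1),
            (mem_comp ends v).mpr hb.1⟩
      have heNT : e ∈ NT := by
        rw [hNT, Finset.mem_filter, ES, Finset.mem_filter]
        exact ⟨⟨Finset.mem_univ e, heC⟩, htre⟩
      have := hmin₁ e heNT
      have hmle : m e ≤ r := by
        rcases hball with hb | hb <;> rw [mem_ball] at hb
        · exact le_trans (min_le_left _ _) hb.2
        · exact le_trans (min_le_right _ _) hb.2
      omega
    have hT2 : ∀ r, r < r₂ → ∀ e, e ∉ ({f₁} : Finset ι) →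
        ((ends e).1 ∈ ball ends v r ∨ (ends e).2 ∈ ball ends v r) → IsTree ends v e := by
      intro r hr e hef hball
      by_contra htre
      have heC : (ends e).1 ∈ comp ends v ∧ (ends e).2 ∈ comp ends v := by
        rcases hball with hb | hb <;> rw [mem_ball] at hb
        · exact ⟨(mem_comp ends v).mpr hb.1,
            (mem_comp ends v).mpr (reach_snd_of_fst ends v hb.1)⟩
        · exact ⟨(mem_comp ends v).mpr (reach_fst_of_snd ends v hb.1),
            (mem_comp ends v).mpr hb.1⟩
      have heNT : e ∈ NT.erase f₁ := by
        rw [Finset.mem_erase]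
        refine ⟨by simpa using hef, ?_⟩
        rw [hNT, Finset.mem_filter, ES, Finset.mem_filter]
        exact ⟨⟨Finset.mem_univ e, heC⟩, htre⟩
      have := hmin₂ e heNT
      have hmle : m e ≤ r := by
        rcases hball with hb | hb <;> rw [mem_ball] at hb
        · exact le_trans (min_le_left _ _) hb.2
        · exact le_trans (min_le_right _ _) hb.2
      omega
    -- ball growth
    have hP1 : ∀ r, r ≤ r₁ → 3 * 2 ^ r ≤ (ball ends v r).card + 2 := by
      intro r
      induction r with
      | zero =>
        intro _
        have h1 : 1 ≤ (ball ends v 0).card := Finset.card_pos.mpr ⟨v, v_mem_ball ends v 0⟩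
        simp only [pow_zero, mul_one]
        omega
      | succ r ih =>
        intro hrr
        have hg := growth ends v hdeg' r ∅ (hT1 r (by omega))
        have hih := ih (by omega)
        rw [Finset.card_empty] at hg
        have hpow : (2:ℕ) ^ (r + 1) = 2 * 2 ^ r := by rw [pow_succ]; ring
        omega
    have hP2 : ∀ k, r₁ + k ≤ r₂ → 2 ^ k * (ball ends v r₁).card ≤ (ball ends v (r₁ + k)).card := by
      intro k
      induction k with
      | zero => intro _; simpa using le_rfl
      | succ k ih =>
        intro hkk
        have hg := growth ends v hdeg' (r₁ + k) {f₁} (hT2 (r₁ + k) (by omega))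
        have hih := ih (by omega)
        rw [Finset.card_singleton] at hg
        have hpow : (2:ℕ) ^ (k + 1) * (ball ends v r₁).card
            = 2 * (2 ^ k * (ball ends v r₁).card) := by rw [pow_succ]; ring
        have heq : r₁ + (k + 1) = (r₁ + k) + 1 := rfl
        rw [heq]
        omega
    have hA := hP1 r₁ le_rfl
    have hB : 2 ^ (r₂ - r₁) * (ball ends v r₁).card ≤ (ball ends v r₂).card := by
      have := hP2 (r₂ - r₁) (by omega)
      rwa [Nat.add_sub_cancel' h12] at this
    -- distance bounds for the endpoints of f₁, f₂
    have hdistf : ∀ f ∈ NT, (HG ends).dist v (ends f).1 + (HG ends).dist v (ends f).2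
        ≤ 2 * m f + 1 ∧ (m f = 0 →
          (HG ends).dist v (ends f).1 + (HG ends).dist v (ends f).2 ≤ 1) := by
      intro f hf
      obtain ⟨⟨hC1, hC2⟩, _⟩ := hNTmem f hf
      have hre1 := (mem_comp ends v).mp hC1
      have hre2 := (mem_comp ends v).mp hC2
      have hd12 : (HG ends).dist v (ends f).2 ≤ (HG ends).dist v (ends f).1 + 1 ∧
          (HG ends).dist v (ends f).1 ≤ (HG ends).dist v (ends f).2 + 1 := by
        by_cases heq : (ends f).1 = (ends f).2
        · rw [heq]; omega
        · have hadj : (HG ends).Adj (ends f).1 (ends f).2 :=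
            hg_adj.mpr ⟨heq, f, Or.inl rfl⟩
          exact ⟨(adj_dist_le ends v hadj hre1).2, (adj_dist_le ends v hadj.symm hre2).2⟩
      have hmc := min_choice ((HG ends).dist v (ends f).1) ((HG ends).dist v (ends f).2)
      have hml := min_le_left ((HG ends).dist v (ends f).1) ((HG ends).dist v (ends f).2)
      have hmr := min_le_right ((HG ends).dist v (ends f).1) ((HG ends).dist v (ends f).2)
      have hmf : m f = min ((HG ends).dist v (ends f).1) ((HG ends).dist v (ends f).2) := rfl
      rcases hmc with hh | hh <;> rw [hmf, hh] <;> omega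
    obtain ⟨hd1, hd1'⟩ := hdistf f₁ hf₁
    obtain ⟨hd2, _⟩ := hdistf f₂ hf₂
    -- the vertex set
    set a₁ := (ends f₁).1 with ha₁
    set b₁ := (ends f₁).2 with hb₁
    set a₂ := (ends f₂).1 with ha₂
    set b₂ := (ends f₂).2 with hb₂
    obtain ⟨⟨hC1, hC2⟩, hnt₁⟩ := hNTmem f₁ hf₁
    obtain ⟨⟨hC3, hC4⟩, hnt₂⟩ := hNTmem f₂ hf₂
    have hra₁ := (mem_comp ends v).mp hC1
    have hrb₁ := (mem_comp ends v).mp hC2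
    have hra₂ := (mem_comp ends v).mp hC3
    have hrb₂ := (mem_comp ends v).mp hC4
    set X : Finset V := insert v (pset ends v a₁ ∪ pset ends v b₁ ∪ pset ends v a₂ ∪
      pset ends v b₂) with hX
    have hvX : v ∈ X := Finset.mem_insert_self v _
    -- memberships
    have hmemX : ∀ u : V, (HG ends).Reachable v u →
        pset ends v u ⊆ pset ends v a₁ ∪ pset ends v b₁ ∪ pset ends v a₂ ∪ pset ends v b₂ →
        u ∈ X := by
      intro u hru hsub
      by_cases huv : u = v
      · rw [huv]; exact hvX
      · exact Finset.mem_insert_of_mem (hsub (mem_pset_self ends v hru huv))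
    have hsub1 : pset ends v a₁ ⊆ pset ends v a₁ ∪ pset ends v b₁ ∪ pset ends v a₂ ∪
        pset ends v b₂ := by
      intro x hx
      exact Finset.mem_union_left _ (Finset.mem_union_left _ (Finset.mem_union_left _ hx))
    have hsub2 : pset ends v b₁ ⊆ pset ends v a₁ ∪ pset ends v b₁ ∪ pset ends v a₂ ∪
        pset ends v b₂ := by
      intro x hx
      exact Finset.mem_union_left _ (Finset.mem_union_left _ (Finset.mem_union_right _ hx))
    have hsub3 : pset ends v a₂ ⊆ pset ends v a₁ ∪ pset ends v b₁ ∪ pset ends v a₂ ∪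
        pset ends v b₂ := by
      intro x hx
      exact Finset.mem_union_left _ (Finset.mem_union_right _ hx)
    have hsub4 : pset ends v b₂ ⊆ pset ends v a₁ ∪ pset ends v b₁ ∪ pset ends v a₂ ∪
        pset ends v b₂ := fun x hx => Finset.mem_union_right _ hx
    have ha₁X : a₁ ∈ X := hmemX a₁ hra₁ hsub1
    have hb₁X : b₁ ∈ X := hmemX b₁ hrb₁ hsub2
    have ha₂X : a₂ ∈ X := hmemX a₂ hra₂ hsub3
    have hb₂X : b₂ ∈ X := hmemX b₂ hrb₂ hsub4
    -- reachability and parent-closure of X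
    have hreX : ∀ u ∈ X, (HG ends).Reachable v u := by
      intro u hu
      rcases Finset.mem_insert.mp hu with rfl | hu
      · exact SimpleGraph.Reachable.refl _
      · rcases Finset.mem_union.mp hu with hu | hu
        · rcases Finset.mem_union.mp hu with hu | hu
          · rcases Finset.mem_union.mp hu with hu | hu
            · exact pset_reach ends v hra₁ hu
            · exact pset_reach ends v hrb₁ hu
          · exact pset_reach ends v hra₂ hu
        · exact pset_reach ends v hrb₂ hu
    have hclX : ∀ u ∈ X, u ≠ v → par ends v u ∈ X := by
      intro u hu hne
      have hins : ∀ w : V, (HG ends).Reachable v w →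
          pset ends v w ⊆ pset ends v a₁ ∪ pset ends v b₁ ∪ pset ends v a₂ ∪ pset ends v b₂ →
          u ∈ pset ends v w → par ends v u ∈ X := by
        intro w hrw hsub hu'
        rcases Finset.mem_insert.mp (pset_par ends v hrw hu') with h | h
        · rw [h]; exact hvX
        · exact Finset.mem_insert_of_mem (hsub h)
      rcases Finset.mem_insert.mp hu with rfl | hu
      · exact absurd rfl hne
      · rcases Finset.mem_union.mp hu with hu | hu
        · rcases Finset.mem_union.mp hu with hu | hu
          · rcases Finset.mem_union.mp hu with hu | hu
            · exact hins a₁ hra₁ hsub1 hu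
            · exact hins b₁ hrb₁ hsub2 hu
          · exact hins a₂ hra₂ hsub3 hu
        · exact hins b₂ hrb₂ hsub4 hu
    -- cardinality of X
    have hcardX : X.card ≤ 1 + ((HG ends).dist v a₁ + (HG ends).dist v b₁ +
        (HG ends).dist v a₂ + (HG ends).dist v b₂) := by
      have h1 := Finset.card_insert_le v (pset ends v a₁ ∪ pset ends v b₁ ∪ pset ends v a₂ ∪
        pset ends v b₂)
      have h2 := Finset.card_union_le (pset ends v a₁ ∪ pset ends v b₁ ∪ pset ends v a₂)
        (pset ends v b₂)
      have h3 := Finset.card_union_le (pset ends v a₁ ∪ pset ends v b₁) (pset ends v a₂)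
      have h4 := Finset.card_union_le (pset ends v a₁) (pset ends v b₁)
      have p1 := pset_card ends v a₁
      have p2 := pset_card ends v b₁
      have p3 := pset_card ends v a₂
      have p4 := pset_card ends v b₂
      rw [hX]
      omega
    -- f₁ and f₂ lie inside X
    have hf₁X : f₁ ∈ ES ends X := by
      rw [ES, Finset.mem_filter]
      exact ⟨Finset.mem_univ f₁, ha₁X, hb₁X⟩
    have hf₂X : f₂ ∈ ES ends X := by
      rw [ES, Finset.mem_filter]
      exact ⟨Finset.mem_univ f₂, ha₂X, hb₂X⟩
    have hmore := tree_lower ends v X hvX hreX hclX hne12.symm hf₁X hf₂X hnt₁ hnt₂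
    -- numeric bound
    have hpow : 2 ^ (X.card + 1) ≤ n ^ 4 := by
      refine arith hA hB (hcardV _) (hcardV _) h12 hn4 ?_ ?_
      · omega
      · intro h0
        have := hd1' h0
        omega
    exact ⟨X, hvX, to_real hn2 hpow, conn_lemma ends v X hvX hreX hclX, hmore⟩
end

section
/- For any integer h ≥ 1, any undirected multigraph G = (V,E) on n vertices with |E| ≥ ((h+1)/h)·|V| contains a set X of fewer than 4·h·log₂(n) vertices such that the induced subgraph G[X] has strictly more edges than vertices. -/
/-!
Write `θ = (h + 1) / h`, so that `θ ^ h ≥ 2`, and induct on the number `n` of vertices; if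
`n < 4 h log₂ n` the whole vertex set will do. Otherwise grow balls `B r` around a vertex `v₀` by
breadth-first search and stop at the first radius `s` at which `B s` spans more edges than
vertices or at most `θ |B s|` edges meet `B s`. In the second case deleting `B s` keeps the edge
density `θ`, and induction applies. In the first case let `ρ ≤ s` be the first radius at which
`B ρ` spans at least as many edges as vertices. Then `B ρ` spans an edge outside the search tree
and `B s` a second one; their endpoints and their tree paths to `v₀` form a set of at most
`2ρ + 2s + 1` vertices spanning more edges than vertices. Before step `s` more than `θ |B r|`
edges meet `B r`, all of them inside `B (r + 1)`, so `|B r| + 1` grows by the factor `θ` per step,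
and `|B r| + h + 1` does so while the balls are trees; this gives `2ρ + 2s + 1 < 4 h log₂ n`.
-/

open Finset Real

namespace Multigraph

variable {V ι : Type*}

section Edges

variable [DecidableEq V] [Fintype ι] (ends : ι → V × V)

def edgesIn (S : Finset V) : Finset ι :=
  univ.filter fun e => (ends e).1 ∈ S ∧ (ends e).2 ∈ S

def edgesMeeting (S : Finset V) : Finset ι :=
  univ.filter fun e => (ends e).1 ∈ S ∨ (ends e).2 ∈ S

variable {ends}

@[simp]
lemma mem_edgesIn {S : Finset V} {e : ι} :
    e ∈ edgesIn ends S ↔ (ends e).1 ∈ S ∧ (ends e).2 ∈ S := by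
  simp [edgesIn]

@[simp]
lemma mem_edgesMeeting {S : Finset V} {e : ι} :
    e ∈ edgesMeeting ends S ↔ (ends e).1 ∈ S ∨ (ends e).2 ∈ S := by
  simp [edgesMeeting]

variable (ends)

lemma edgesIn_univ [Fintype V] : edgesIn ends univ = univ := by
  ext; simp

lemma card_edgesIn_compl_add_card_edgesMeeting [Fintype V] (S : Finset V) :
    (edgesIn ends Sᶜ).card + (edgesMeeting ends S).card = Fintype.card ι := by
  have : edgesIn ends Sᶜ = univ.filter fun e => ¬((ends e).1 ∈ S ∨ (ends e).2 ∈ S) := by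
    ext; simp [not_or]
  rw [this, edgesMeeting, add_comm, card_filter_add_card_filter_not, card_univ]

end Edges

section UnderlyingGraph

variable (ends : ι → V × V)

def graph : SimpleGraph V :=
  SimpleGraph.fromRel fun a b => ∃ e, ends e = (a, b)

def Joins (e : ι) (a b : V) : Prop :=
  ends e = (a, b) ∨ ends e = (b, a)

variable {ends}

lemma Joins.symm {e : ι} {a b : V} (h : Joins ends e a b) : Joins ends e b a :=
  Or.symm h

lemma Joins.eq_and_eq_or_eq_and_eq {e : ι} {a b c d : V} (h₁ : Joins ends e a b)
    (h₂ : Joins ends e c d) : (a = c ∧ b = d) ∨ (a = d ∧ b = c) := by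
  rcases h₁ with h₁ | h₁ <;> rcases h₂ with h₂ | h₂ <;> rw [h₁, Prod.ext_iff] at h₂ <;>
    simp only at h₂ <;> tauto

lemma Joins.eq_or_adj {e : ι} {a b : V} (h : Joins ends e a b) : a = b ∨ (graph ends).Adj a b := by
  by_cases hab : a = b
  · exact Or.inl hab
  · refine Or.inr ((SimpleGraph.fromRel_adj _ _ _).2 ⟨hab, ?_⟩)
    rcases h with h | h
    exacts [Or.inl ⟨e, h⟩, Or.inr ⟨e, h⟩]

lemma exists_joins_of_adj {a b : V} (h : (graph ends).Adj a b) : ∃ e, Joins ends e a b := by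
  obtain ⟨-, ⟨e, he⟩ | ⟨e, he⟩⟩ := (SimpleGraph.fromRel_adj _ _ _).1 h
  exacts [⟨e, Or.inl he⟩, ⟨e, Or.inr he⟩]

end UnderlyingGraph

section Ball

variable [Fintype V] (ends : ι → V × V) (v₀ : V)

open Classical in
noncomputable def ball (r : ℕ) : Finset V :=
  univ.filter fun u => (graph ends).Reachable v₀ u ∧ (graph ends).dist v₀ u ≤ r

variable {ends v₀}

lemma mem_ball {r : ℕ} {u : V} :
    u ∈ ball ends v₀ r ↔ (graph ends).Reachable v₀ u ∧ (graph ends).dist v₀ u ≤ r := by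
  simp [ball]

variable (ends v₀)

lemma ball_zero : ball ends v₀ 0 = {v₀} := by
  ext u
  simp only [mem_ball, nonpos_iff_eq_zero, mem_singleton]
  constructor
  · rintro ⟨hu, hd⟩
    exact (hu.dist_eq_zero_iff.1 hd).symm
  · rintro rfl
    simp

lemma ball_mono : Monotone (ball ends v₀) := fun _ _ hrs _ hu =>
  mem_ball.2 ⟨(mem_ball.1 hu).1, (mem_ball.1 hu).2.trans hrs⟩

lemma self_mem_ball (r : ℕ) : v₀ ∈ ball ends v₀ r :=
  ball_mono ends v₀ (Nat.zero_le r) (by simp [ball_zero])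

variable {ends v₀}

lemma Joins.mem_ball_succ {e : ι} {a b : V} {r : ℕ} (he : Joins ends e a b)
    (ha : a ∈ ball ends v₀ r) : b ∈ ball ends v₀ (r + 1) := by
  obtain ⟨hreach, hdist⟩ := mem_ball.1 ha
  rcases he.eq_or_adj with rfl | hadj
  · exact ball_mono ends v₀ (Nat.le_succ r) ha
  refine mem_ball.2 ⟨hreach.trans hadj.reachable, ?_⟩
  have := hadj.reachable.dist_triangle_right v₀
  rw [SimpleGraph.dist_eq_one_iff_adj.2 hadj] at this
  omega

variable (ends v₀)

lemma edgesMeeting_ball_subset [DecidableEq V] [Fintype ι] (r : ℕ) :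
    edgesMeeting ends (ball ends v₀ r) ⊆ edgesIn ends (ball ends v₀ (r + 1)) := by
  intro e he
  have hj : Joins ends e (ends e).1 (ends e).2 := Or.inl rfl
  rcases mem_edgesMeeting.1 he with h | h
  · exact mem_edgesIn.2 ⟨ball_mono ends v₀ (Nat.le_succ r) h, hj.mem_ball_succ h⟩
  · exact mem_edgesIn.2 ⟨hj.symm.mem_ball_succ h, ball_mono ends v₀ (Nat.le_succ r) h⟩

end Ball

section Tree

variable (ends : ι → V × V) (v₀ : V)

lemma exists_parent {u : V} (hu : (graph ends).Reachable v₀ u) (hne : u ≠ v₀) :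
    ∃ p : V × ι, Joins ends p.2 p.1 u ∧ (graph ends).Reachable v₀ p.1 ∧
      (graph ends).dist v₀ p.1 + 1 = (graph ends).dist v₀ u := by
  obtain ⟨w, hw⟩ := hu.symm.exists_walk_length_eq_dist
  have hnil : ¬w.Nil := SimpleGraph.Walk.not_nil_of_ne hne
  have hadj := w.adj_snd hnil
  obtain ⟨e, he⟩ := exists_joins_of_adj hadj.symm
  refine ⟨(w.snd, e), he, hu.trans hadj.reachable, ?_⟩
  have h₁ := (graph ends).dist_le w.tail
  have h₂ := w.length_tail_add_one hnil
  have h₃ := hadj.symm.reachable.dist_triangle_right v₀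
  rw [SimpleGraph.dist_eq_one_iff_adj.2 hadj.symm] at h₃
  rw [SimpleGraph.dist_comm] at h₁ hw
  dsimp only
  omega

open Classical in
/-- The parent of `u` in a breadth-first search tree of `graph ends` rooted at `v₀`; the root and
the vertices not reachable from it are sent to `v₀`. -/
noncomputable def parent (u : V) : V :=
  if h : (graph ends).Reachable v₀ u ∧ u ≠ v₀ then (exists_parent ends v₀ h.1 h.2).choose.1
  else v₀

open Classical in
noncomputable def parentEdge [Nonempty ι] (u : V) : ι :=
  if h : (graph ends).Reachable v₀ u ∧ u ≠ v₀ then (exists_parent ends v₀ h.1 h.2).choose.2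
  else Classical.arbitrary ι

variable {ends v₀}

lemma parent_spec {u : V} (hu : (graph ends).Reachable v₀ u) (hne : u ≠ v₀) :
    (graph ends).Reachable v₀ (parent ends v₀ u) ∧
      (graph ends).dist v₀ (parent ends v₀ u) + 1 = (graph ends).dist v₀ u := by
  have h : (graph ends).Reachable v₀ u ∧ u ≠ v₀ := ⟨hu, hne⟩
  rw [parent, dif_pos h]
  exact (exists_parent ends v₀ h.1 h.2).choose_spec.2

lemma joins_parentEdge [Nonempty ι] {u : V} (hu : (graph ends).Reachable v₀ u) (hne : u ≠ v₀) :
    Joins ends (parentEdge ends v₀ u) (parent ends v₀ u) u := by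
  have h : (graph ends).Reachable v₀ u ∧ u ≠ v₀ := ⟨hu, hne⟩
  rw [parent, parentEdge, dif_pos h, dif_pos h]
  exact (exists_parent ends v₀ h.1 h.2).choose_spec.1

lemma parent_root : parent ends v₀ v₀ = v₀ := by
  simp [parent]

lemma reachable_and_dist_iterate_parent {u : V} (hu : (graph ends).Reachable v₀ u) (k : ℕ) :
    (graph ends).Reachable v₀ ((parent ends v₀)^[k] u) ∧
      (graph ends).dist v₀ ((parent ends v₀)^[k] u) = (graph ends).dist v₀ u - k := by
  induction k with
  | zero => exact ⟨hu, rfl⟩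
  | succ k ih =>
    rw [Function.iterate_succ_apply']
    by_cases hroot : (parent ends v₀)^[k] u = v₀
    · rw [hroot] at ih ⊢
      rw [parent_root]
      simp only [SimpleGraph.dist_self] at ih ⊢
      exact ⟨ih.1, by omega⟩
    · obtain ⟨hreach, hdist⟩ := parent_spec ih.1 hroot
      exact ⟨hreach, by omega⟩

lemma iterate_parent_dist {u : V} (hu : (graph ends).Reachable v₀ u) :
    (parent ends v₀)^[(graph ends).dist v₀ u] u = v₀ := by
  obtain ⟨hreach, hdist⟩ := reachable_and_dist_iterate_parent hu ((graph ends).dist v₀ u)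
  exact (hreach.dist_eq_zero_iff.1 (by omega)).symm

lemma parentEdge_injOn [Nonempty ι] :
    Set.InjOn (parentEdge ends v₀) {u | (graph ends).Reachable v₀ u ∧ u ≠ v₀} := by
  rintro u ⟨hu, hu₀⟩ w ⟨hw, hw₀⟩ heq
  have hju := joins_parentEdge hu hu₀
  rw [heq] at hju
  -- an edge shared by two tree vertices would make each the parent of the other
  rcases hju.eq_and_eq_or_eq_and_eq (joins_parentEdge hw hw₀) with ⟨-, h⟩ | ⟨h₁, h₂⟩
  · exact h
  · have du := (parent_spec hu hu₀).2
    have dw := (parent_spec hw hw₀).2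
    rw [h₁] at du
    rw [← h₂] at dw
    omega

variable [DecidableEq V]

variable (ends v₀) in
noncomputable def branch (u : V) : Finset V :=
  (range ((graph ends).dist v₀ u)).image fun k => (parent ends v₀)^[k] u

variable (ends v₀) in
noncomputable def treeHull (S : Finset V) : Finset V :=
  insert v₀ (S.biUnion (branch ends v₀))

lemma card_branch_le (u : V) : (branch ends v₀ u).card ≤ (graph ends).dist v₀ u :=
  card_image_le.trans (card_range _).le

lemma mem_treeHull {S : Finset V} {u : V} (hu : (graph ends).Reachable v₀ u) (huS : u ∈ S) :
    u ∈ treeHull ends v₀ S := by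
  by_cases hu₀ : u = v₀
  · exact hu₀ ▸ mem_insert_self _ _
  refine mem_insert_of_mem (mem_biUnion.2 ⟨u, huS, mem_image.2 ⟨0, ?_, rfl⟩⟩)
  simpa using hu.pos_dist_of_ne (Ne.symm hu₀)

lemma parent_mem_treeHull {S : Finset V} (hS : ∀ u ∈ S, (graph ends).Reachable v₀ u) {w : V}
    (hw : w ∈ treeHull ends v₀ S) : parent ends v₀ w ∈ treeHull ends v₀ S := by
  rcases mem_insert.1 hw with rfl | hw
  · rw [parent_root]; exact mem_insert_self _ _
  obtain ⟨u, huS, hwu⟩ := mem_biUnion.1 hw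
  obtain ⟨k, hk, rfl⟩ := mem_image.1 hwu
  rw [← Function.iterate_succ_apply' (parent ends v₀)]
  rcases (Nat.succ_le_of_lt (mem_range.1 hk)).eq_or_lt with hk' | hk'
  · rw [hk', iterate_parent_dist (hS u huS)]; exact mem_insert_self _ _
  · exact mem_insert_of_mem (mem_biUnion.2 ⟨u, huS, mem_image.2 ⟨k + 1, mem_range.2 hk', rfl⟩⟩)

lemma treeHull_subset_ball [Fintype V] {S : Finset V} {r : ℕ} (hS : S ⊆ ball ends v₀ r) :
    treeHull ends v₀ S ⊆ ball ends v₀ r := by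
  intro w hw
  rcases mem_insert.1 hw with rfl | hw
  · exact self_mem_ball ends w r
  obtain ⟨u, huS, hwu⟩ := mem_biUnion.1 hw
  obtain ⟨k, -, rfl⟩ := mem_image.1 hwu
  obtain ⟨hu, hdu⟩ := mem_ball.1 (hS huS)
  obtain ⟨hreach, hdist⟩ := reachable_and_dist_iterate_parent hu k
  exact mem_ball.2 ⟨hreach, by omega⟩

lemma card_biUnion_branch_le [Fintype V] {S : Finset V} {r : ℕ} (hS : S ⊆ ball ends v₀ r) :
    (S.biUnion (branch ends v₀)).card ≤ S.card * r :=
  card_biUnion_le_card_mul _ _ _ fun u hu => (card_branch_le u).trans (mem_ball.1 (hS hu)).2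

lemma card_treeHull_union_le [Fintype V] {S T : Finset V} {r r' : ℕ} (hS : S ⊆ ball ends v₀ r)
    (hT : T ⊆ ball ends v₀ r') : (treeHull ends v₀ (S ∪ T)).card ≤ S.card * r + T.card * r' + 1 :=
  calc (treeHull ends v₀ (S ∪ T)).card
      ≤ (S.biUnion (branch ends v₀) ∪ T.biUnion (branch ends v₀)).card + 1 := by
        rw [treeHull, ← union_biUnion]; exact card_insert_le _ _
    _ ≤ S.card * r + T.card * r' + 1 := by
        grw [card_union_le, card_biUnion_branch_le hS, card_biUnion_branch_le hT]

variable [DecidableEq ι] [Nonempty ι]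

variable (ends v₀) in
noncomputable def treeEdges (C : Finset V) : Finset ι :=
  (C.erase v₀).image (parentEdge ends v₀)

lemma card_treeEdges {C : Finset V} (hC : ∀ u ∈ C, (graph ends).Reachable v₀ u) (hv₀ : v₀ ∈ C) :
    (treeEdges ends v₀ C).card + 1 = C.card := by
  rw [treeEdges, card_image_of_injOn, card_erase_add_one hv₀]
  intro u hu w hw
  exact parentEdge_injOn ⟨hC u (mem_of_mem_erase hu), ne_of_mem_erase hu⟩
    ⟨hC w (mem_of_mem_erase hw), ne_of_mem_erase hw⟩

lemma treeEdges_mono {B C : Finset V} (hBC : B ⊆ C) : treeEdges ends v₀ B ⊆ treeEdges ends v₀ C :=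
  image_subset_image (erase_subset_erase _ hBC)

variable [Fintype ι]

lemma treeEdges_subset_edgesIn {C : Finset V} (hC : ∀ u ∈ C, (graph ends).Reachable v₀ u)
    (hclosed : ∀ u ∈ C, parent ends v₀ u ∈ C) : treeEdges ends v₀ C ⊆ edgesIn ends C := by
  intro e he
  obtain ⟨u, hu, rfl⟩ := mem_image.1 he
  have huC := mem_of_mem_erase hu
  rcases joins_parentEdge (hC u huC) (ne_of_mem_erase hu) with h | h <;> rw [mem_edgesIn, h]
  exacts [⟨hclosed u huC, huC⟩, ⟨huC, hclosed u huC⟩]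

lemma card_edgesIn_inter_treeEdges_lt {B C : Finset V} (hBC : B ⊆ C)
    (hC : ∀ u ∈ C, (graph ends).Reachable v₀ u) (hv₀ : v₀ ∈ B) :
    (edgesIn ends B ∩ treeEdges ends v₀ C).card < B.card := by
  have hsub : edgesIn ends B ∩ treeEdges ends v₀ C ⊆ treeEdges ends v₀ B := by
    intro e he
    obtain ⟨heB, heC⟩ := mem_inter.1 he
    obtain ⟨u, hu, rfl⟩ := mem_image.1 heC
    have hj := joins_parentEdge (hC u (mem_of_mem_erase hu)) (ne_of_mem_erase hu)
    have huB : u ∈ B := by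
      rcases hj with h | h <;> rw [mem_edgesIn, h] at heB
      exacts [heB.2, heB.1]
    exact mem_image_of_mem _ (mem_erase.2 ⟨ne_of_mem_erase hu, huB⟩)
  have := card_treeEdges (fun u hu => hC u (hBC hu)) hv₀
  have := card_le_card hsub
  omega

lemma card_lt_card_edgesIn {X : Finset V} (hX : ∀ u ∈ X, (graph ends).Reachable v₀ u)
    (hv₀ : v₀ ∈ X) (hclosed : ∀ u ∈ X, parent ends v₀ u ∈ X) {e₁ e₂ : ι} (hne : e₁ ≠ e₂)
    (he₁ : e₁ ∈ edgesIn ends X) (he₂ : e₂ ∈ edgesIn ends X)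
    (he₁T : e₁ ∉ treeEdges ends v₀ X) (he₂T : e₂ ∉ treeEdges ends v₀ X) :
    X.card < (edgesIn ends X).card := by
  have hsub : insert e₁ (insert e₂ (treeEdges ends v₀ X)) ⊆ edgesIn ends X :=
    insert_subset he₁ (insert_subset he₂ (treeEdges_subset_edgesIn hX hclosed))
  have := card_le_card hsub
  rw [card_insert_of_notMem (by simp [hne, he₁T]), card_insert_of_notMem he₂T] at this
  have := card_treeEdges hX hv₀
  omega

end Tree

section Extraction

variable [Fintype V] [DecidableEq V] [Fintype ι] {ends : ι → V × V} {v₀ : V}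

lemma exists_nontree_edges [DecidableEq ι] [Nonempty ι] {r₁ r₀ : ℕ} (hr : r₁ ≤ r₀)
    (h₁ : (ball ends v₀ r₁).card ≤ (edgesIn ends (ball ends v₀ r₁)).card)
    (h₀ : (ball ends v₀ r₀).card < (edgesIn ends (ball ends v₀ r₀)).card) :
    ∃ e₁ ∈ edgesIn ends (ball ends v₀ r₁), ∃ e₂ ∈ edgesIn ends (ball ends v₀ r₀), e₁ ≠ e₂ ∧
      e₁ ∉ treeEdges ends v₀ (ball ends v₀ r₀) ∧ e₂ ∉ treeEdges ends v₀ (ball ends v₀ r₀) := by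
  set B₁ := ball ends v₀ r₁
  set B₀ := ball ends v₀ r₀
  have hreach : ∀ u ∈ B₀, (graph ends).Reachable v₀ u := fun u hu => (mem_ball.1 hu).1
  -- fewer than `|B₁|` tree edges lie in `B₁`, and fewer than `|B₀|` in `B₀`
  obtain ⟨e₁, he₁, he₁T⟩ : ∃ e ∈ edgesIn ends B₁, e ∉ edgesIn ends B₁ ∩ treeEdges ends v₀ B₀ :=
    exists_mem_notMem_of_card_lt_card ((card_edgesIn_inter_treeEdges_lt (ball_mono ends v₀ hr)
      hreach (self_mem_ball ends v₀ r₁)).trans_le h₁)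
  obtain ⟨e₂, he₂, he₂T⟩ :
      ∃ e ∈ edgesIn ends B₀, e ∉ insert e₁ (edgesIn ends B₀ ∩ treeEdges ends v₀ B₀) := by
    apply exists_mem_notMem_of_card_lt_card
    have := card_edgesIn_inter_treeEdges_lt subset_rfl hreach (self_mem_ball ends v₀ r₀)
    have := card_insert_le e₁ (edgesIn ends B₀ ∩ treeEdges ends v₀ B₀)
    omega
  rw [mem_insert, not_or, mem_inter, not_and] at he₂T
  rw [mem_inter, not_and] at he₁T
  exact ⟨e₁, he₁, e₂, he₂, Ne.symm he₂T.1, he₁T he₁, he₂T.2 he₂⟩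

lemma exists_dense_of_ball {r₁ r₀ : ℕ} (hr : r₁ ≤ r₀)
    (h₁ : (ball ends v₀ r₁).card ≤ (edgesIn ends (ball ends v₀ r₁)).card)
    (h₀ : (ball ends v₀ r₀).card < (edgesIn ends (ball ends v₀ r₀)).card) :
    ∃ X : Finset V, X.card ≤ 2 * r₁ + 2 * r₀ + 1 ∧ X.card < (edgesIn ends X).card := by
  classical
  have : Nonempty ι := by
    obtain ⟨e, -⟩ := card_pos.1 (Nat.zero_lt_of_lt h₀)
    exact ⟨e⟩
  obtain ⟨e₁, he₁, e₂, he₂, hne, he₁T, he₂T⟩ := exists_nontree_edges hr h₁ h₀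
  set P₁ : Finset V := {(ends e₁).1, (ends e₁).2}
  set P₀ : Finset V := {(ends e₂).1, (ends e₂).2}
  have hP₁ : P₁ ⊆ ball ends v₀ r₁ := by simpa [P₁, insert_subset_iff] using he₁
  have hP₀ : P₀ ⊆ ball ends v₀ r₀ := by simpa [P₀, insert_subset_iff] using he₂
  have hPB : P₁ ∪ P₀ ⊆ ball ends v₀ r₀ := union_subset (hP₁.trans (ball_mono ends v₀ hr)) hP₀
  have hreach : ∀ u ∈ ball ends v₀ r₀, (graph ends).Reachable v₀ u := fun u hu => (mem_ball.1 hu).1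
  set X := treeHull ends v₀ (P₁ ∪ P₀)
  have hXB : X ⊆ ball ends v₀ r₀ := treeHull_subset_ball hPB
  have hPX : P₁ ∪ P₀ ⊆ X := fun u hu => mem_treeHull (hreach u (hPB hu)) hu
  refine ⟨X, ?_, card_lt_card_edgesIn (fun u hu => hreach u (hXB hu)) (mem_insert_self _ _)
    (fun u hu => parent_mem_treeHull (fun w hw => hreach w (hPB hw)) hu) hne
    (mem_edgesIn.2 ⟨hPX (by simp [P₁]), hPX (by simp [P₁])⟩)
    (mem_edgesIn.2 ⟨hPX (by simp [P₀]), hPX (by simp [P₀])⟩)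
    (fun h => he₁T (treeEdges_mono hXB h)) (fun h => he₂T (treeEdges_mono hXB h))⟩
  grw [card_treeHull_union_le hP₁ hP₀, card_le_two, card_le_two]

end Extraction

section Numerics

variable {h : ℕ}

lemma two_le_add_one_div_pow (hh : 1 ≤ h) : (2 : ℝ) ≤ ((h + 1 : ℝ) / h) ^ h := by
  have hpos : (0 : ℝ) < h := by exact_mod_cast hh
  have key := one_add_mul_le_pow (a := (h : ℝ)⁻¹) (by linarith [inv_pos.2 hpos]) h
  rw [mul_inv_cancel₀ hpos.ne'] at key
  rw [add_div, div_self hpos.ne', one_div]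
  linarith

lemma le_mul_logb_of_pow_le (hh : 1 ≤ h) {k : ℕ} {y : ℝ} (hk : ((h + 1 : ℝ) / h) ^ k ≤ y) :
    (k : ℝ) ≤ h * logb 2 y := by
  have hpos : (0 : ℝ) < h := by exact_mod_cast hh
  have hθ : (0 : ℝ) < (h + 1) / h := by positivity
  have h2 : log 2 ≤ h * log ((h + 1) / h) := by
    rw [← log_pow]; exact log_le_log (by norm_num) (two_le_add_one_div_pow hh)
  have hy : k * log ((h + 1) / h) ≤ log y := by
    rw [← log_pow]; exact log_le_log (by positivity) hk
  rw [logb, mul_div_assoc', le_div_iff₀ (log_pos one_lt_two)]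
  calc (k : ℝ) * log 2 ≤ k * (h * log ((h + 1) / h)) := by gcongr
    _ = h * (k * log ((h + 1) / h)) := by ring
    _ ≤ h * log y := by gcongr

lemma lt_mul_logb_of_two_pow_lt {a b : ℕ} {c : ℝ} (hab : (2 : ℝ) ^ a < c ^ b) :
    (a : ℝ) < b * logb 2 c := by
  have := log_lt_log (by positivity) hab
  rw [log_pow, log_pow] at this
  rw [logb, mul_div_assoc', lt_div_iff₀ (log_pos one_lt_two)]
  exact this

lemma lt_of_theta_mul_le (hh : 1 ≤ h) {a b : ℕ} (ha : 0 < a) (hab : (h + 1 : ℝ) / h * a ≤ b) :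
    a < b := by
  have hpos : (0 : ℝ) < h := by exact_mod_cast hh
  have ha' : (0 : ℝ) < a := by exact_mod_cast ha
  have : (a : ℝ) < (h + 1) / h * a := by
    rw [div_mul_eq_mul_div, lt_div_iff₀ hpos]; nlinarith
  exact_mod_cast this.trans_le hab

lemma theta_mul_le_of_add_eq (hh : 1 ≤ h) {a b c d n m : ℕ} (hE : (h + 1 : ℝ) / h * n ≤ m)
    (hm : c + d = m) (hd : h * d ≤ (h + 1) * b) (hn : a + b = n) :
    (h + 1 : ℝ) / h * a ≤ c := by
  have hpos : (0 : ℝ) < h := by exact_mod_cast hh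
  have hd' : (h : ℝ) * d ≤ (h + 1) * b := by exact_mod_cast hd
  rw [← hm, ← hn] at hE
  push_cast at hE
  rw [div_mul_eq_mul_div, div_le_iff₀ hpos] at hE ⊢
  nlinarith

lemma one_lt_four_mul_logb (hh : 1 ≤ h) {n : ℕ} (hn : 2 ≤ n) : (1 : ℝ) < 4 * h * logb 2 n := by
  have : (1 : ℝ) ≤ logb 2 n := by
    rw [← logb_self_eq_one one_lt_two]
    exact logb_le_logb_of_le one_lt_two (by norm_num) (by exact_mod_cast hn)
  have : (1 : ℝ) ≤ h := by exact_mod_cast hh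
  nlinarith

lemma sixteen_le_of_four_mul_logb_le (hh : 1 ≤ h) {n : ℕ} (hn : 2 ≤ n)
    (hle : 4 * h * logb 2 n ≤ n) : 16 ≤ n := by
  by_contra! hlt
  have hpow : (2 : ℝ) ^ n < (n : ℝ) ^ 4 := by interval_cases n <;> norm_num
  have := lt_mul_logb_of_two_pow_lt hpow
  have : 0 ≤ logb 2 (n : ℝ) := logb_nonneg one_lt_two (by exact_mod_cast (by omega : 1 ≤ n))
  have : (1 : ℝ) ≤ h := by exact_mod_cast hh
  push_cast at *
  nlinarith

lemma two_mul_add_three_lt (hh : 1 ≤ h) {n k : ℕ} (hn : 16 ≤ n)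
    (hk : ((h + 1 : ℝ) / h) ^ k ≤ n + 1) : (2 * k + 3 : ℝ) < 4 * h * logb 2 n := by
  have hn' : (16 : ℝ) ≤ n := by exact_mod_cast hn
  have hh' : (1 : ℝ) ≤ h := by exact_mod_cast hh
  have hk' := le_mul_logb_of_pow_le hh (hk.trans (show (n + 1 : ℝ) ≤ n ^ 2 / 2 ^ 2 by nlinarith))
  rw [logb_div (by positivity) (by norm_num), logb_pow, logb_pow, logb_self_eq_one one_lt_two]
    at hk'
  push_cast at hk'
  nlinarith

lemma four_mul_add_lt (hh : 1 ≤ h) {n q a : ℕ} {c : ℝ} (hn : 0 < n) (hc : 0 < c)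
    (hq : ((h + 1 : ℝ) / h) ^ q ≤ n / c) (ha : (2 : ℝ) ^ a < c ^ 4) :
    (4 * q + a : ℝ) < 4 * h * logb 2 n := by
  have hh' : (1 : ℝ) ≤ h := by exact_mod_cast hh
  have hq' := le_mul_logb_of_pow_le hh hq
  rw [logb_div (by positivity) hc.ne'] at hq'
  have hca := lt_mul_logb_of_two_pow_lt ha
  push_cast at hca
  have : (0 : ℝ) ≤ a := Nat.cast_nonneg a
  nlinarith

lemma four_mul_add_three_lt (hh : 1 ≤ h) {n q : ℕ} (hn : 16 ≤ n)
    (hq : (h + 1) * ((h + 1 : ℝ) / h) ^ q ≤ n + 1) : (4 * q + 3 : ℝ) < 4 * h * logb 2 n := by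
  have hn' : (16 : ℝ) ≤ n := by exact_mod_cast hn
  have hh' : (1 : ℝ) ≤ h := by exact_mod_cast hh
  refine four_mul_add_lt hh (a := 3) (c := 7 / 4) (by omega) (by norm_num) ?_ (by norm_num)
  rw [le_div_iff₀ (by norm_num)]
  nlinarith [pow_pos (show (0 : ℝ) < (h + 1) / h by positivity) q]

lemma four_mul_add_five_lt (hh : 1 ≤ h) {n q : ℕ} (hn : 16 ≤ n)
    (hq : (h + 2) * ((h + 1 : ℝ) / h) ^ q ≤ n + h + 1) : (4 * q + 5 : ℝ) < 4 * h * logb 2 n := by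
  have hn' : (16 : ℝ) ≤ n := by exact_mod_cast hn
  have hh' : (1 : ℝ) ≤ h := by exact_mod_cast hh
  refine four_mul_add_lt hh (a := 5) (c := 5 / 2) (by omega) (by norm_num) ?_ (by norm_num)
  rw [le_div_iff₀ (by norm_num)]
  nlinarith [pow_pos (show (0 : ℝ) < (h + 1) / h by positivity) q]

lemma two_mul_add_two_mul_add_three_lt (hh : 1 ≤ h) {n p q : ℕ} (hn : 16 ≤ n) (hpq : p ≤ q)
    (hgrowth : ((h + 1 : ℝ) / h) ^ (q - p) * ((h + 2) * ((h + 1 : ℝ) / h) ^ p - (h + 1)) ≤ n + 1) :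
    (2 * p + 2 * q + 3 : ℝ) < 4 * h * logb 2 n := by
  set θ : ℝ := (h + 1) / h with hθ
  have hθ1 : 1 ≤ θ := by rw [hθ, le_div_iff₀ (by positivity)]; linarith
  have hpow : θ ^ (q - p) * θ ^ p = θ ^ q := by rw [← pow_add, Nat.sub_add_cancel hpq]
  have hpos : 0 ≤ θ ^ (q - p) := by positivity
  by_cases hsmall : θ ^ p ≤ h + 1
  · -- for `1 ≤ y ≤ h + 1` one has `y ^ 2 ≤ (h + 2) y - (h + 1)`
    have hsq : (θ ^ p) ^ 2 ≤ (h + 2) * θ ^ p - (h + 1) := by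
      nlinarith [one_le_pow₀ (n := p) hθ1]
    have hk : θ ^ (p + q) ≤ n + 1 := by
      calc θ ^ (p + q) = θ ^ (q - p) * (θ ^ p) ^ 2 := by
            rw [← pow_mul, ← pow_add]; congr 1; omega
        _ ≤ n + 1 := (mul_le_mul_of_nonneg_left hsq hpos).trans hgrowth
    have := two_mul_add_three_lt hh hn hk
    push_cast at this
    linarith
  · have hq : (h + 1) * θ ^ q ≤ n + 1 := by
      calc (h + 1) * θ ^ q = θ ^ (q - p) * ((h + 1) * θ ^ p) := by rw [← hpow]; ring
        _ ≤ n + 1 := by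
          refine (mul_le_mul_of_nonneg_left ?_ hpos).trans hgrowth
          nlinarith [not_le.mp hsmall]
    have := four_mul_add_three_lt hh hn hq
    have : (p : ℝ) ≤ q := by exact_mod_cast hpq
    linarith

lemma theta_mul_add_one_le (hh : 1 ≤ h) {a b : ℕ} (hab : (h + 1) * a + 1 ≤ h * b) :
    (h + 1 : ℝ) / h * (a + 1) ≤ b + 1 := by
  have hpos : (0 : ℝ) < h := by exact_mod_cast hh
  have : ((h + 1) * a + 1 : ℝ) ≤ h * b := by exact_mod_cast hab
  rw [div_mul_eq_mul_div, div_le_iff₀ hpos]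
  linarith

lemma theta_mul_add_succ_le (hh : 1 ≤ h) {a b : ℕ} (hab : (h + 1) * a + 1 + h ≤ h * b) :
    (h + 1 : ℝ) / h * (a + h + 1) ≤ b + h + 1 := by
  have hpos : (0 : ℝ) < h := by exact_mod_cast hh
  have : ((h + 1) * a + 1 + h : ℝ) ≤ h * b := by exact_mod_cast hab
  rw [div_mul_eq_mul_div, div_le_iff₀ hpos]
  nlinarith

section Growth

/-! Here `b r` stands for the size of the `r`-th ball of a breadth-first search stopped at step `s`,
whose balls are trees before step `ρ`. -/

variable {b : ℕ → ℕ} {ρ s : ℕ}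

lemma add_two_mul_pow_le_of_tree (hh : 1 ≤ h) (hb0 : b 0 = 1)
    (htree : ∀ r, r + 1 < ρ → (h + 1) * b r + 1 + h ≤ h * b (r + 1)) {r : ℕ} (hr : r < ρ) :
    (h + 2) * ((h + 1 : ℝ) / h) ^ r ≤ b r + h + 1 := by
  have := geom_le (u := fun k => (b k + h + 1 : ℝ)) (by positivity) r fun k hk =>
    theta_mul_add_succ_le hh (htree k (by omega))
  simp only [hb0, Nat.cast_one] at this
  linarith

lemma pow_sub_mul_le_of_forest (hh : 1 ≤ h) (hb0 : b 0 = 1)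
    (hforest : ∀ r, r + 1 < s → (h + 1) * b r + 1 ≤ h * b (r + 1))
    (htree : ∀ r, r + 1 < ρ → (h + 1) * b r + 1 + h ≤ h * b (r + 1)) {q : ℕ} (hρq : ρ ≤ q)
    (hqs : q < s) :
    ((h + 1 : ℝ) / h) ^ (q - ρ) * ((h + 2) * ((h + 1 : ℝ) / h) ^ ρ - (h + 1)) ≤ b q + 1 := by
  set θ : ℝ := (h + 1) / h with hθ
  have hρ : (h + 2) * θ ^ ρ - (h + 1) ≤ b ρ + 1 := by
    obtain rfl | ⟨p, rfl⟩ : ρ = 0 ∨ ∃ p, ρ = p + 1 := by cases ρ <;> simp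
    · norm_num [hb0]
    · have hθh : θ * h = h + 1 := by rw [hθ]; field_simp
      calc (h + 2) * θ ^ (p + 1) - (h + 1) = θ * ((h + 2) * θ ^ p - h) := by
            rw [pow_succ, mul_sub, ← hθh]; ring
        _ ≤ θ * (b p + 1) := by
            gcongr; linarith [add_two_mul_pow_le_of_tree hh hb0 htree (Nat.lt_succ_self p)]
        _ ≤ b (p + 1) + 1 := theta_mul_add_one_le hh (hforest p (by omega))
  have hforest' := geom_le (u := fun k => (b (ρ + k) + 1 : ℝ)) (by positivity) (q - ρ)
    fun k hk => theta_mul_add_one_le hh (hforest (ρ + k) (by omega))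
  simp only [show ρ + (q - ρ) = q by omega, add_zero] at hforest'
  exact (mul_le_mul_of_nonneg_left hρ (by positivity)).trans hforest'

lemma two_mul_add_two_mul_add_one_lt (hh : 1 ≤ h) {n : ℕ} (hn : 16 ≤ n) (hρs : ρ ≤ s)
    (hb0 : b 0 = 1) (hbn : ∀ r, b r ≤ n)
    (hforest : ∀ r, r + 1 < s → (h + 1) * b r + 1 ≤ h * b (r + 1))
    (htree : ∀ r, r + 1 < ρ → (h + 1) * b r + 1 + h ≤ h * b (r + 1)) :
    (2 * ρ + 2 * s + 1 : ℝ) < 4 * h * logb 2 n := by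
  obtain rfl | ⟨q, rfl⟩ : s = 0 ∨ ∃ q, s = q + 1 := by cases s <;> simp
  · obtain rfl : ρ = 0 := by omega
    simpa using one_lt_four_mul_logb hh (by omega : 2 ≤ n)
  have hbq : (b q : ℝ) ≤ n := by exact_mod_cast hbn q
  rcases hρs.eq_or_lt with rfl | hρq
  · have := four_mul_add_five_lt hh hn
      ((add_two_mul_pow_le_of_tree hh hb0 htree (Nat.lt_succ_self q)).trans (by linarith))
    push_cast
    linarith
  · have := two_mul_add_two_mul_add_three_lt hh hn (Nat.le_of_lt_succ hρq)
      ((pow_sub_mul_le_of_forest hh hb0 hforest htree (Nat.le_of_lt_succ hρq)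
        (Nat.lt_succ_self q)).trans (by linarith))
    push_cast
    linarith

end Growth

end Numerics

section Search

variable [Fintype V] [DecidableEq V] [Fintype ι] {ends : ι → V × V}

variable (ends) in
lemma exists_ball_dense_or_sparse_boundary (v₀ : V) (h : ℕ) :
    ∃ r, (ball ends v₀ r).card < (edgesIn ends (ball ends v₀ r)).card ∨
      h * (edgesMeeting ends (ball ends v₀ r)).card ≤ (h + 1) * (ball ends v₀ r).card := by
  by_contra! hno
  have grow : ∀ r, r + 1 ≤ (ball ends v₀ r).card := by
    intro r
    induction r with
    | zero => simp [ball_zero]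
    | succ r ih =>
      have hmeet : (ball ends v₀ r).card < (edgesMeeting ends (ball ends v₀ r)).card :=
        Nat.lt_of_mul_lt_mul_left ((Nat.mul_le_mul_right _ (Nat.le_succ h)).trans_lt (hno r).2)
      have := card_le_card (edgesMeeting_ball_subset ends v₀ r)
      have := (hno (r + 1)).1
      omega
  have := (grow (Fintype.card V)).trans (card_le_univ _)
  omega

lemma exists_small_dense_or_sparse_boundary {h : ℕ} (hh : 1 ≤ h) (hn : 16 ≤ Fintype.card V) (v₀ : V) :
    (∃ X : Finset V, (X.card : ℝ) < 4 * h * logb 2 (Fintype.card V) ∧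
      X.card < (edgesIn ends X).card) ∨
    ∃ B : Finset V, v₀ ∈ B ∧ (edgesIn ends B).card ≤ B.card ∧
      h * (edgesMeeting ends B).card ≤ (h + 1) * B.card := by
  classical
  have hstop := exists_ball_dense_or_sparse_boundary ends v₀ h
  set s := Nat.find hstop
  have hbefore : ∀ r < s, (edgesIn ends (ball ends v₀ r)).card ≤ (ball ends v₀ r).card ∧
      (h + 1) * (ball ends v₀ r).card < h * (edgesMeeting ends (ball ends v₀ r)).card :=
    fun r hr => by simpa using Nat.find_min hstop hr
  by_cases hdense : (ball ends v₀ s).card < (edgesIn ends (ball ends v₀ s)).card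
  swap
  · exact Or.inr ⟨ball ends v₀ s, self_mem_ball ends v₀ s, not_lt.1 hdense,
      (Nat.find_spec hstop).resolve_left hdense⟩
  left
  have htree : ∃ r, (ball ends v₀ r).card ≤ (edgesIn ends (ball ends v₀ r)).card := ⟨s, hdense.le⟩
  set ρ := Nat.find htree
  have hρs : ρ ≤ s := Nat.find_min' htree hdense.le
  obtain ⟨X, hXcard, hXdense⟩ := exists_dense_of_ball hρs (Nat.find_spec htree) hdense
  refine ⟨X, lt_of_le_of_lt (show (X.card : ℝ) ≤ 2 * ρ + 2 * s + 1 by exact_mod_cast hXcard) ?_,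
    hXdense⟩
  refine two_mul_add_two_mul_add_one_lt (b := fun r => (ball ends v₀ r).card) hh hn hρs
    (by simp [ball_zero]) (fun r => card_le_univ _) (fun r hr => ?_) (fun r hr => ?_)
  all_goals
    have hleave := (hbefore r (by omega)).2
    have hmeet := Nat.mul_le_mul_left h (card_le_card (edgesMeeting_ball_subset ends v₀ r))
  · have := Nat.mul_le_mul_left h (hbefore (r + 1) hr).1
    omega
  · have := Nat.mul_le_mul_left h (not_le.1 (Nat.find_min htree (show r + 1 < ρ from hr)))
    rw [Nat.mul_succ] at this
    omega

end Search

section Induce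

variable [DecidableEq V] [Fintype ι] (ends : ι → V × V)

def induce (S : Finset V) : {e // (ends e).1 ∈ S ∧ (ends e).2 ∈ S} → S × S :=
  fun e => (⟨(ends e.1).1, e.2.1⟩, ⟨(ends e.1).2, e.2.2⟩)

lemma card_edges_induce (S : Finset V) :
    Fintype.card {e // (ends e).1 ∈ S ∧ (ends e).2 ∈ S} = (edgesIn ends S).card :=
  Fintype.card_subtype _

lemma card_edgesIn_induce_le (S : Finset V) (X : Finset S) :
    (edgesIn (induce ends S) X).card ≤
      (edgesIn ends (X.map (Function.Embedding.subtype (· ∈ S)))).card := by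
  refine card_le_card_of_injOn (fun e => e.1) (fun e he => ?_) Subtype.val_injective.injOn
  rw [mem_coe, mem_edgesIn] at he ⊢
  exact ⟨mem_map_of_mem _ he.1, mem_map_of_mem _ he.2⟩

variable [Fintype V] {ends} {h : ℕ}

lemma card_univ_lt_card_edgesIn_univ (hh : 1 ≤ h) (hV : 0 < Fintype.card V)
    (hE : (h + 1 : ℝ) / h * Fintype.card V ≤ Fintype.card ι) :
    (univ : Finset V).card < (edgesIn ends univ).card := by
  rw [edgesIn_univ, card_univ, card_univ]
  exact lt_of_theta_mul_le hh hV hE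

lemma theta_mul_card_le_card_edges_induce_compl (hh : 1 ≤ h)
    (hE : (h + 1 : ℝ) / h * Fintype.card V ≤ Fintype.card ι) {B : Finset V}
    (hB : h * (edgesMeeting ends B).card ≤ (h + 1) * B.card) :
    (h + 1 : ℝ) / h * Fintype.card ↥Bᶜ ≤ Fintype.card {e // (ends e).1 ∈ Bᶜ ∧ (ends e).2 ∈ Bᶜ} := by
  rw [Fintype.card_coe, card_edges_induce]
  exact theta_mul_le_of_add_eq hh hE (card_edgesIn_compl_add_card_edgesMeeting ends B) hB
    (card_compl_add_card B)

end Induce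

universe u v

theorem exists_dense_of_theta_mul_le {h : ℕ} (hh : 1 ≤ h) (n : ℕ) :
    ∀ {V : Type u} {ι : Type v} [Fintype V] [DecidableEq V] [Fintype ι] (ends : ι → V × V),
      Fintype.card V = n → 2 ≤ n → ((h + 1 : ℝ) / h) * n ≤ Fintype.card ι →
      ∃ X : Finset V, (X.card : ℝ) < 4 * h * logb 2 n ∧ X.card < (edgesIn ends X).card := by
  induction n using Nat.strong_induction_on with
  | _ n ih =>
  intro V ι _ _ _ ends hV hn hE
  subst hV
  by_cases hsmall : (Fintype.card V : ℝ) < 4 * h * logb 2 (Fintype.card V)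
  · exact ⟨univ, by simpa using hsmall, card_univ_lt_card_edgesIn_univ hh (by omega) hE⟩
  obtain ⟨v₀⟩ : Nonempty V := Fintype.card_pos_iff.1 (by omega)
  obtain hX | ⟨B, hv₀B, hBedges, hBsparse⟩ := exists_small_dense_or_sparse_boundary (ends := ends)
    hh (sixteen_le_of_four_mul_logb_le hh hn (not_lt.1 hsmall)) v₀
  · exact hX
  have hBV : B.card < Fintype.card V := by
    refine (card_le_univ B).lt_of_ne fun hBV => ?_
    obtain rfl := eq_univ_of_card B hBV
    exact hBedges.not_gt (card_univ_lt_card_edgesIn_univ hh (by omega) hE)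
  have hB : 0 < B.card := card_pos.2 ⟨v₀, hv₀B⟩
  have hBc := card_compl_add_card B
  have hBcE := theta_mul_card_le_card_edges_induce_compl hh hE hBsparse
  obtain ⟨X, hXcard, hXdense⟩ : ∃ X : Finset ↥Bᶜ, (X.card : ℝ) < 4 * h * logb 2 (Fintype.card V) ∧
      X.card < (edgesIn (induce ends Bᶜ) X).card := by
    by_cases hone : Bᶜ.card = 1
    · refine ⟨univ, ?_, card_univ_lt_card_edgesIn_univ hh (by simp; omega) hBcE⟩
      rw [card_univ, Fintype.card_coe, hone]
      exact_mod_cast one_lt_four_mul_logb hh hn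
    obtain ⟨X, hXcard, hXdense⟩ := ih Bᶜ.card (by omega) (induce ends Bᶜ) (Fintype.card_coe _)
      (by omega) (by rwa [Fintype.card_coe] at hBcE)
    have hlog : logb 2 (Bᶜ.card : ℝ) ≤ logb 2 (Fintype.card V) := logb_le_logb_of_le one_lt_two
      (by exact_mod_cast (by omega : 0 < Bᶜ.card)) (by exact_mod_cast (by omega : Bᶜ.card ≤ _))
    exact ⟨X, hXcard.trans_le (by gcongr), hXdense⟩
  exact ⟨X.map (Function.Embedding.subtype _), by rwa [card_map],
    by simpa using hXdense.trans_le (card_edgesIn_induce_le ends Bᶜ X)⟩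

end Multigraph

/-- (Berman–Fürer, Lemma 3.2)  A multigraph is encoded by an edge-index
type `ι` with endpoint map `ends : ι → V × V` (loops and parallel edges allowed).
For any integer `h ≥ 1`, if `|E| ≥ ((h+1)/h)·|V|` then there is a set `X` of fewer than
`4·h·log₂ n` vertices such that the induced subgraph `G[X]` has strictly more edges
than vertices. -/
theorem stmt_1 {V ι : Type*} [Fintype V] [DecidableEq V] [Fintype ι]
    (ends : ι → V × V) (h : ℕ) (hh : 1 ≤ h)
    (n : ℕ) (hn : n = Fintype.card V) (hn2 : 2 ≤ n)
    (hE : ((h + 1 : ℝ) / h) * Fintype.card V ≤ Fintype.card ι) :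
    ∃ X : Finset V,
      (X.card : ℝ) < 4 * h * Real.logb 2 n ∧
      X.card < (Finset.univ.filter (fun e : ι => (ends e).1 ∈ X ∧ (ends e).2 ∈ X)).card := by
  subst hn
  exact Multigraph.exists_dense_of_theta_mul_le hh _ ends rfl hn2 hE
end

section
/- Let 𝒞 be a family of k-element sets, let 𝒜 ⊆ 𝒞 be a 2-locally optimal packing and ℬ ⊆ 𝒞 any packing. Then |ℬ| ≤ ((k+1)/2)·|𝒜|. -/
/-!
Let `deg b` be the number of sets of `𝒜` meeting `b ∈ ℬ`. Since `ℬ` is a packing, a set of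
`𝒜` meets at most `k` sets of `ℬ`, so `∑ deg ≤ k |𝒜|`. Local optimality says that a packing
`𝒟` with `|𝒟| ≤ 2` meets at least `|𝒟|` sets of `𝒜`: with `𝒟 = {b}` this gives `deg b ≥ 1`,
and with `𝒟 = {b, b'}` it shows that distinct `b, b'` of degree one have distinct neighbours,
so at most `|𝒜|` sets of `ℬ` have degree one. Hence
`2 |ℬ| ≤ ∑ deg + #{deg = 1} ≤ (k + 1) |𝒜|`.
-/

open Finset

section

variable {α : Type*} [DecidableEq α]

def IsLocallyOptimal (t : ℕ) (𝒞 A : Finset (Finset α)) : Prop :=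
  ∀ D ⊆ 𝒞, (D : Set (Finset α)).PairwiseDisjoint id → #D ≤ t →
    #({a ∈ A | ∀ d ∈ D, Disjoint a d} ∪ D) ≤ #A

namespace IsLocallyOptimal

variable {s t : ℕ} {𝒞 A D : Finset (Finset α)}

theorem mono (hA : IsLocallyOptimal t 𝒞 A) (hst : s ≤ t) : IsLocallyOptimal s 𝒞 A :=
  fun D hD𝒞 hD hDs => hA D hD𝒞 hD (hDs.trans hst)

theorem card_le_card_filter_not_forall_disjoint (hA : IsLocallyOptimal t 𝒞 A) (hD𝒞 : D ⊆ 𝒞)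
    (hD : (D : Set (Finset α)).PairwiseDisjoint id) (hDt : #D ≤ t)
    (hne : ∀ d ∈ D, d.Nonempty) : #D ≤ #{a ∈ A | ¬ ∀ d ∈ D, Disjoint a d} := by
  have hdisj : Disjoint {a ∈ A | ∀ d ∈ D, Disjoint a d} D := by
    rw [disjoint_right]
    intro d hd hdA
    exact (hne d hd).ne_empty (disjoint_self.mp ((mem_filter.mp hdA).2 d hd))
  have hexchange := hA D hD𝒞 hD hDt
  rw [card_union_of_disjoint hdisj] at hexchange
  have hsplit := card_filter_add_card_filter_not (s := A) (fun a => ∀ d ∈ D, Disjoint a d)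
  omega

theorem filter_not_disjoint_nonempty (hA : IsLocallyOptimal 1 𝒞 A) {b : Finset α}
    (hb𝒞 : b ∈ 𝒞) (hb : b.Nonempty) : ({a ∈ A | ¬ Disjoint a b}).Nonempty := by
  have hb1 := hA.card_le_card_filter_not_forall_disjoint (D := {b}) (singleton_subset_iff.mpr hb𝒞)
    (by simp) (by simp) (by simpa using hb)
  simpa [← card_pos] using hb1

theorem card_filter_card_filter_not_disjoint_eq_one_le (hA : IsLocallyOptimal 2 𝒞 A)
    {B : Finset (Finset α)} (hB𝒞 : B ⊆ 𝒞) (hB : (B : Set (Finset α)).PairwiseDisjoint id)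
    (hne : ∀ b ∈ B, b.Nonempty) : #{b ∈ B | #{a ∈ A | ¬ Disjoint a b} = 1} ≤ #A := by
  refine card_le_card_of_forall_subsingleton (fun b a => {a' ∈ A | ¬ Disjoint a' b} = {a})
    (fun b hb => ?_) (fun a _ => ?_)
  · obtain ⟨a, ha⟩ := card_eq_one.mp (mem_filter.mp hb).2
    exact ⟨a, (mem_filter.mp (ha ▸ mem_singleton_self a)).1, ha⟩
  · rintro b ⟨hb, hba⟩ b' ⟨hb', hb'a⟩
    by_contra hbb'
    have hbB := (mem_filter.mp hb).1
    have hb'B := (mem_filter.mp hb').1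
    have hsub : ({b, b'} : Finset (Finset α)) ⊆ B :=
      insert_subset hbB (singleton_subset_iff.mpr hb'B)
    have hpair := hA.card_le_card_filter_not_forall_disjoint (hsub.trans hB𝒞)
      (hB.subset (coe_subset.mpr hsub)) card_le_two (fun d hd => hne d (hsub hd))
    have hmeet : {a' ∈ A | ¬ ∀ d ∈ ({b, b'} : Finset (Finset α)), Disjoint a' d} ⊆ {a} := by
      intro a' ha'
      simp only [mem_filter, mem_insert, mem_singleton, forall_eq_or_imp, forall_eq,
        not_and_or] at ha'
      rcases ha' with ⟨ha'A, hmeet | hmeet⟩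
      · exact hba ▸ mem_filter.mpr ⟨ha'A, hmeet⟩
      · exact hb'a ▸ mem_filter.mpr ⟨ha'A, hmeet⟩
    have hcontra := hpair.trans (card_le_card hmeet)
    rw [card_pair hbb', card_singleton] at hcontra
    omega

end IsLocallyOptimal

theorem card_filter_not_disjoint_le_card {B : Finset (Finset α)}
    (hB : (B : Set (Finset α)).PairwiseDisjoint id) (a : Finset α) :
    #{b ∈ B | ¬ Disjoint a b} ≤ #a :=
  calc #{b ∈ B | ¬ Disjoint a b}
      ≤ #({b ∈ B | ¬ Disjoint a b}.biUnion (a ∩ ·)) :=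
        card_le_card_biUnion
          ((hB.subset (coe_subset.mpr (filter_subset _ _))).mono fun _ => inter_subset_right)
          (fun _ hb => not_disjoint_iff_nonempty_inter.mp (mem_filter.mp hb).2)
    _ ≤ #a := card_le_card (biUnion_subset.mpr fun _ _ => inter_subset_left)

theorem sum_card_filter_not_disjoint_le_sum_card (A : Finset (Finset α))
    {B : Finset (Finset α)} (hB : (B : Set (Finset α)).PairwiseDisjoint id) :
    ∑ b ∈ B, #{a ∈ A | ¬ Disjoint a b} ≤ ∑ a ∈ A, #a :=
  calc ∑ b ∈ B, #{a ∈ A | ¬ Disjoint a b}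
      = ∑ a ∈ A, #{b ∈ B | ¬ Disjoint a b} :=
        (sum_card_bipartiteAbove_eq_sum_card_bipartiteBelow _).symm
    _ ≤ ∑ a ∈ A, #a := sum_le_sum fun a _ => card_filter_not_disjoint_le_card hB a

theorem two_mul_card_le_sum_add_card_filter_eq_one {ι : Type*} (s : Finset ι) (f : ι → ℕ)
    (hf : ∀ i ∈ s, 1 ≤ f i) : 2 * #s ≤ ∑ i ∈ s, f i + #{i ∈ s | f i = 1} := by
  rw [card_filter, ← sum_add_distrib, mul_comm, ← smul_eq_mul, ← sum_const]
  refine sum_le_sum fun i hi => ?_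
  have hfi := hf i hi
  split_ifs <;> omega

end

theorem stmt_3_general {α : Type*} [DecidableEq α] (k : ℕ) (hk : 1 ≤ k)
    (𝒞 A B : Finset (Finset α))
    (hcard : ∀ S ∈ 𝒞, S.card = k)
    (hA : A ⊆ 𝒞)
    (hB : B ⊆ 𝒞) (hBpack : ∀ x ∈ B, ∀ y ∈ B, x ≠ y → Disjoint x y)
    (hlocal : ∀ D ⊆ 𝒞, (∀ x ∈ D, ∀ y ∈ D, x ≠ y → Disjoint x y) → D.card ≤ 2 →
      ((A.filter (fun a => ∀ d ∈ D, Disjoint a d)) ∪ D).card ≤ A.card) :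
    (B.card : ℝ) ≤ (k + 1) / 2 * A.card := by
  have hopt : IsLocallyOptimal 2 𝒞 A := fun D hD𝒞 hD hD2 =>
    hlocal D hD𝒞 (fun _ hx _ hy => hD hx hy) hD2
  have hBdisj : (B : Set (Finset α)).PairwiseDisjoint id := fun _ hx _ hy => hBpack _ hx _ hy
  have hne : ∀ b ∈ B, b.Nonempty := fun b hb => card_pos.mp (by rw [hcard b (hB hb)]; omega)
  have hdeg := two_mul_card_le_sum_add_card_filter_eq_one B (fun b => #{a ∈ A | ¬ Disjoint a b})
    fun b hb => ((hopt.mono one_le_two).filter_not_disjoint_nonempty (hB hb) (hne b hb)).card_pos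
  have hsum : ∑ b ∈ B, #{a ∈ A | ¬ Disjoint a b} ≤ k * #A := by
    rw [mul_comm, ← smul_eq_mul, ← sum_const, ← sum_congr rfl fun a ha => hcard a (hA ha)]
    exact sum_card_filter_not_disjoint_le_sum_card A hBdisj
  have hone := hopt.card_filter_card_filter_not_disjoint_eq_one_le hB hBdisj hne
  have hcount : 2 * #B ≤ (k + 1) * #A := by linarith [add_mul k 1 #A]
  rw [div_mul_eq_mul_div, le_div_iff₀ two_pos]
  exact_mod_cast (mul_comm (#B) 2).trans_le hcount

/-- Let `𝒞` be a family of `k`-element sets, `𝒜 ⊆ 𝒞` a 2-locally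
optimal packing and `ℬ ⊆ 𝒞` any packing.  Then `|ℬ| ≤ ((k+1)/2)·|𝒜|`.
A packing is a pairwise disjoint subfamily; 2-local optimality says that for every
packing `𝒟` with `|𝒟| ≤ 2`, removing from `𝒜` the sets meeting `𝒟` and adding `𝒟`
does not increase the cardinality. -/
theorem stmt_3 {α : Type*} [DecidableEq α] (k : ℕ) (hk : 1 ≤ k)
    (𝒞 A B : Finset (Finset α))
    (hcard : ∀ S ∈ 𝒞, S.card = k)
    (hA : A ⊆ 𝒞) (hApack : ∀ x ∈ A, ∀ y ∈ A, x ≠ y → Disjoint x y)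
    (hB : B ⊆ 𝒞) (hBpack : ∀ x ∈ B, ∀ y ∈ B, x ≠ y → Disjoint x y)
    (hlocal : ∀ D ⊆ 𝒞, (∀ x ∈ D, ∀ y ∈ D, x ≠ y → Disjoint x y) → D.card ≤ 2 →
      ((A.filter (fun a => ∀ d ∈ D, Disjoint a d)) ∪ D).card ≤ A.card) :
    (B.card : ℝ) ≤ (k + 1) / 2 * A.card :=
  stmt_3_general k hk 𝒞 A B hcard hA hB hBpack hlocal
end

section
/- Let 𝒜 be a 2-locally optimal packing of k-sets and ℬ any packing. Let ℬ₁ be the sets of ℬ intersecting exactly one set of 𝒜 and ℬ₂ those intersecting at least two sets of 𝒜. Then ℬ = ℬ₁ ∪ ℬ₂ and |ℬ₁| + 2|ℬ₂| ≤ k·|𝒜|. -/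
/-!
Local optimality with the single set `{b}` shows that every nonempty `b ∈ 𝒞` meets some set of
`𝒜`, so `ℬ` splits into `ℬ₁ ∪ ℬ₂`. Counting the intersecting pairs `(a, b) ∈ 𝒜 × ℬ` from the side
of `ℬ` gives at least `|ℬ₁| + 2|ℬ₂|`; from the side of `𝒜` at most `k|𝒜|`, since the members of
the packing `ℬ` meeting a `k`-set `a` cut out disjoint nonempty pieces of `a`.
-/

open Finset

namespace Finset

variable {ι α : Type*}

lemma filter_eq_one_union_filter_two_le [DecidableEq ι] {s : Finset ι} {f : ι → ℕ} (hf : ∀ i ∈ s, 1 ≤ f i) :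
    s = s.filter (fun i => f i = 1) ∪ s.filter (fun i => 2 ≤ f i) := by
  rw [← filter_or, filter_true_of_mem fun i hi => by have := hf i hi; omega]

lemma card_filter_eq_one_add_two_mul_card_filter_two_le_le_sum (s : Finset ι) (f : ι → ℕ) :
    #(s.filter (fun i => f i = 1)) + 2 * #(s.filter (fun i => 2 ≤ f i)) ≤ ∑ i ∈ s, f i := by
  rw [card_filter, card_filter, mul_sum, ← sum_add_distrib]
  exact sum_le_sum fun i _ => by split_ifs <;> omega

variable [DecidableEq α]

lemma card_filter_not_disjoint_le_card (a : Finset α) {B : Finset (Finset α)}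
    (hB : (B : Set (Finset α)).PairwiseDisjoint id) :
    #(B.filter (fun b => ¬ Disjoint a b)) ≤ #a := by
  have hpieces : ((B.filter (fun b => ¬ Disjoint a b) : Finset (Finset α)) :
      Set (Finset α)).PairwiseDisjoint (a ∩ ·) := fun x hx y hy hxy =>
    (hB (mem_of_mem_filter x hx) (mem_of_mem_filter y hy) hxy).mono inter_subset_right
      inter_subset_right
  calc #(B.filter (fun b => ¬ Disjoint a b))
      ≤ #((B.filter (fun b => ¬ Disjoint a b)).biUnion (a ∩ ·)) :=
        card_le_card_biUnion hpieces fun b hb =>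
          not_disjoint_iff_nonempty_inter.mp (mem_filter.mp hb).2
    _ ≤ #a := card_le_card <| biUnion_subset.mpr fun _ _ => inter_subset_left

lemma exists_not_disjoint_of_card_union_singleton_le {A : Finset (Finset α)} {b : Finset α}
    (hb : b.Nonempty)
    (h : #(A.filter (fun a => ∀ d ∈ ({b} : Finset (Finset α)), Disjoint a d) ∪ {b}) ≤ #A) :
    ∃ a ∈ A, ¬ Disjoint a b := by
  by_contra! hdisj
  have hbA : b ∉ A := fun hbA => hb.ne_empty (disjoint_self.mp (hdisj b hbA))
  rw [filter_true_of_mem fun a ha d hd => mem_singleton.mp hd ▸ hdisj a ha, union_comm,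
    ← insert_eq, card_insert_of_notMem hbA] at h
  omega

end Finset

theorem stmt_4_general {α : Type*} [DecidableEq α] (k : ℕ) (hk : 1 ≤ k)
    (𝒞 A B : Finset (Finset α))
    (hcard : ∀ S ∈ 𝒞, S.card = k)
    (hA : A ⊆ 𝒞)
    (hB : B ⊆ 𝒞) (hBpack : ∀ x ∈ B, ∀ y ∈ B, x ≠ y → Disjoint x y)
    (hlocal : ∀ D ⊆ 𝒞, (∀ x ∈ D, ∀ y ∈ D, x ≠ y → Disjoint x y) → D.card ≤ 2 →
      ((A.filter (fun a => ∀ d ∈ D, Disjoint a d)) ∪ D).card ≤ A.card) :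
    B = B.filter (fun b => (A.filter (fun a => ¬ Disjoint a b)).card = 1) ∪
        B.filter (fun b => 2 ≤ (A.filter (fun a => ¬ Disjoint a b)).card) ∧
    (B.filter (fun b => (A.filter (fun a => ¬ Disjoint a b)).card = 1)).card
      + 2 * (B.filter (fun b => 2 ≤ (A.filter (fun a => ¬ Disjoint a b)).card)).card
      ≤ k * A.card := by
  have hmeets : ∀ b ∈ B, 1 ≤ #(A.filter (fun a => ¬ Disjoint a b)) := by
    intro b hb
    have hbne : b.Nonempty := card_pos.mp (hcard b (hB hb) ▸ hk)
    obtain ⟨a, ha, hab⟩ := exists_not_disjoint_of_card_union_singleton_le hbne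
      (hlocal {b} (singleton_subset_iff.mpr (hB hb)) (by simp) (by simp))
    exact card_pos.mpr ⟨a, mem_filter.mpr ⟨ha, hab⟩⟩
  refine ⟨filter_eq_one_union_filter_two_le hmeets, ?_⟩
  calc _ ≤ ∑ b ∈ B, #(A.filter (fun a => ¬ Disjoint a b)) :=
        card_filter_eq_one_add_two_mul_card_filter_two_le_le_sum B _
    _ = ∑ a ∈ A, #(B.filter (fun b => ¬ Disjoint a b)) :=
        (sum_card_bipartiteAbove_eq_sum_card_bipartiteBelow _).symm
    _ ≤ ∑ a ∈ A, k := sum_le_sum fun a ha =>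
        hcard a (hA ha) ▸ card_filter_not_disjoint_le_card a fun x hx y hy => hBpack x hx y hy
    _ = k * #A := by rw [sum_const, smul_eq_mul, mul_comm]

/-- Let `𝒜` be a 2-locally optimal packing of `k`-sets and `ℬ` any
packing.  Let `ℬ₁` be the sets of `ℬ` intersecting exactly one set of `𝒜` and `ℬ₂`
those intersecting at least two.  Then `ℬ = ℬ₁ ∪ ℬ₂` and `|ℬ₁| + 2|ℬ₂| ≤ k·|𝒜|`. -/
theorem stmt_4 {α : Type*} [DecidableEq α] (k : ℕ) (hk : 1 ≤ k)
    (𝒞 A B : Finset (Finset α))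
    (hcard : ∀ S ∈ 𝒞, S.card = k)
    (hA : A ⊆ 𝒞) (hApack : ∀ x ∈ A, ∀ y ∈ A, x ≠ y → Disjoint x y)
    (hB : B ⊆ 𝒞) (hBpack : ∀ x ∈ B, ∀ y ∈ B, x ≠ y → Disjoint x y)
    (hlocal : ∀ D ⊆ 𝒞, (∀ x ∈ D, ∀ y ∈ D, x ≠ y → Disjoint x y) → D.card ≤ 2 →
      ((A.filter (fun a => ∀ d ∈ D, Disjoint a d)) ∪ D).card ≤ A.card) :
    B = B.filter (fun b => (A.filter (fun a => ¬ Disjoint a b)).card = 1) ∪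
        B.filter (fun b => 2 ≤ (A.filter (fun a => ¬ Disjoint a b)).card) ∧
    (B.filter (fun b => (A.filter (fun a => ¬ Disjoint a b)).card = 1)).card
      + 2 * (B.filter (fun b => 2 ≤ (A.filter (fun a => ¬ Disjoint a b)).card)).card
      ≤ k * A.card :=
  stmt_4_general k hk 𝒞 A B hcard hA hB hBpack hlocal
end

section
/- Let M be a matching in a k-uniform hypergraph that is 2-locally optimal, and let x be a feasible solution to the intersecting family LP with support ℱ. For each e ∈ M, the family ℱ₁(e) of hyperedges f with x_f > 0 that intersect e and intersect no other hyperedge of M is an intersecting family, and consequently x(ℱ₁) ≤ |M|, where ℱ₁ is the set of hyperedges in the support intersecting exactly one hyperedge of M. -/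
/-- Let `M` be a 2-locally optimal matching in a `k`-uniform
hypergraph and `x` a feasible solution to the intersecting family LP.  For each
`e ∈ M`, the family `ℱ₁(e)` of support hyperedges intersecting `e` and no other
hyperedge of `M` is an intersecting family; consequently `x(ℱ₁) ≤ |M|`, where `ℱ₁`
is the set of support hyperedges intersecting exactly one hyperedge of `M`. -/
theorem stmt_8 {V : Type*} [DecidableEq V] (k : ℕ)
    (E : Finset (Finset V)) (huniform : ∀ e ∈ E, e.card = k)
    (M : Finset (Finset V)) (hM : M ⊆ E)
    (hMpack : ∀ x ∈ M, ∀ y ∈ M, x ≠ y → Disjoint x y)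
    (hlocal : ¬ ∃ e ∈ M, ∃ f₁ ∈ E, ∃ f₂ ∈ E, f₁ ∉ M ∧ f₂ ∉ M ∧ f₁ ≠ f₂ ∧
      Disjoint f₁ f₂ ∧ ∀ g ∈ M, g ≠ e → Disjoint f₁ g ∧ Disjoint f₂ g)
    (x : Finset V → ℝ)
    (hx01 : ∀ e ∈ E, 0 ≤ x e ∧ x e ≤ 1)
    (hdeg : ∀ v : V, ∑ e ∈ E.filter (fun e => v ∈ e), x e ≤ 1)
    (hK : ∀ K ⊆ E, (∀ f ∈ K, ∀ g ∈ K, ¬ Disjoint f g) → ∑ f ∈ K, x f ≤ 1) :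
    (∀ e ∈ M, ∀ f₁ ∈ E, ∀ f₂ ∈ E,
      (0 < x f₁ ∧ ¬ Disjoint f₁ e ∧ ∀ g ∈ M, g ≠ e → Disjoint f₁ g) →
      (0 < x f₂ ∧ ¬ Disjoint f₂ e ∧ ∀ g ∈ M, g ≠ e → Disjoint f₂ g) →
      ¬ Disjoint f₁ f₂) ∧
    ∑ f ∈ E.filter (fun f => 0 < x f ∧ (M.filter (fun g => ¬ Disjoint f g)).card = 1), x f
      ≤ (M.card : ℝ) := by
  classical
  have part1 : ∀ e ∈ M, ∀ f₁ ∈ E, ∀ f₂ ∈ E,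
      (0 < x f₁ ∧ ¬ Disjoint f₁ e ∧ ∀ g ∈ M, g ≠ e → Disjoint f₁ g) →
      (0 < x f₂ ∧ ¬ Disjoint f₂ e ∧ ∀ g ∈ M, g ≠ e → Disjoint f₂ g) →
      ¬ Disjoint f₁ f₂ := by
    rintro e he f₁ hf₁ f₂ hf₂ ⟨hx1, hi1, ho1⟩ ⟨hx2, hi2, ho2⟩ hd
    by_cases h1 : f₁ ∈ M
    · have he1 : f₁ = e := by
        by_contra hne
        exact hi1 (hMpack f₁ h1 e he hne)
      subst he1
      by_cases h2 : f₂ ∈ M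
      · have he2 : f₂ = f₁ := by
          by_contra hne
          exact hi2 (hMpack f₂ h2 f₁ he hne)
        subst he2
        exact hi2 hd
      · exact hi2 hd.symm
    · by_cases h2 : f₂ ∈ M
      · have he2 : f₂ = e := by
          by_contra hne
          exact hi2 (hMpack f₂ h2 e he hne)
        subst he2
        exact hi1 hd
      · have hne : f₁ ≠ f₂ := by
          rintro rfl
          rw [disjoint_self] at hd
          exact hi1 (by simp [hd])
        exact hlocal ⟨e, he, f₁, hf₁, f₂, hf₂, h1, h2, hne, hd,
          fun g hg hge => ⟨ho1 g hg hge, ho2 g hg hge⟩⟩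
  refine ⟨part1, ?_⟩
  set K : Finset V → Finset (Finset V) := fun e =>
    E.filter (fun f => 0 < x f ∧ (M.filter (fun g => ¬ Disjoint f g)).card = 1 ∧
      ¬ Disjoint f e) with hKdef
  have hmem : ∀ f e, f ∈ K e ↔ f ∈ E ∧ 0 < x f ∧
      (M.filter (fun g => ¬ Disjoint f g)).card = 1 ∧ ¬ Disjoint f e := by
    intro f e; simp [hKdef]
  -- the big filter is the biUnion of the K e over e ∈ M
  have hset : E.filter (fun f => 0 < x f ∧
      (M.filter (fun g => ¬ Disjoint f g)).card = 1) = M.biUnion K := by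
    ext f
    simp only [Finset.mem_filter, Finset.mem_biUnion, hmem]
    constructor
    · rintro ⟨hfE, hpos, hcard⟩
      obtain ⟨e, hee⟩ := Finset.card_eq_one.mp hcard
      have heM : e ∈ M.filter (fun g => ¬ Disjoint f g) := by
        rw [hee]; exact Finset.mem_singleton_self e
      rw [Finset.mem_filter] at heM
      exact ⟨e, heM.1, hfE, hpos, hcard, heM.2⟩
    · rintro ⟨e, heM, hfE, hpos, hcard, hnd⟩
      exact ⟨hfE, hpos, hcard⟩
  -- for f ∈ K e, all other members of M are disjoint from f
  have honly : ∀ e ∈ M, ∀ f, f ∈ K e → ∀ g ∈ M, g ≠ e → Disjoint f g := by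
    intro e he f hf g hg hge
    rw [hmem] at hf
    obtain ⟨hfE, hpos, hcard, hnd⟩ := hf
    by_contra hgd
    obtain ⟨a, ha⟩ := Finset.card_eq_one.mp hcard
    have h1 : e ∈ M.filter (fun g => ¬ Disjoint f g) := Finset.mem_filter.mpr ⟨he, hnd⟩
    have h2 : g ∈ M.filter (fun g => ¬ Disjoint f g) := Finset.mem_filter.mpr ⟨hg, hgd⟩
    rw [ha, Finset.mem_singleton] at h1 h2
    exact hge (h2.trans h1.symm)
  have hdisj : ∀ e₁ ∈ M, ∀ e₂ ∈ M, e₁ ≠ e₂ → Disjoint (K e₁) (K e₂) := by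
    intro e₁ h1 e₂ h2 hne
    rw [Finset.disjoint_left]
    intro f hf1 hf2
    have := honly e₁ h1 f hf1 e₂ h2 (Ne.symm hne)
    rw [hmem] at hf2
    exact hf2.2.2.2 this
  rw [hset, Finset.sum_biUnion hdisj]
  calc ∑ e ∈ M, ∑ f ∈ K e, x f ≤ ∑ e ∈ M, 1 := by
        refine Finset.sum_le_sum fun e he => ?_
        refine hK (K e) (Finset.filter_subset _ _) fun f hf g hg => ?_
        have hf' := (hmem f e).mp hf
        have hg' := (hmem g e).mp hg
        exact part1 e he f hf'.1 g hg'.1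
          ⟨hf'.2.1, hf'.2.2.2, honly e he f hf⟩
          ⟨hg'.2.1, hg'.2.2.2, honly e he g hg⟩
    _ = (M.card : ℝ) := by simp
end

section
/- Let G = (V,E) be a graph with positive weights w, let A ⊆ V, and let C = {v} ∪ T be a claw with center v ∈ A and talons T. If for every u ∈ T the vertex v is a maximum-weight A-neighbor of u, and Σ_{u∈T} (w(u) − ½·w(u,A)) > ½·w(v), and every u ∈ T satisfies w(u) − ½·w(u,A) > 0, then Σ_{u∈T} w(u)² > Σ_{t ∈ N(T)∩A} w(t)², i.e., the talons improve the squared-weight of A. -/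
lemma sum_biUnion_le_aux {ι α : Type*} [DecidableEq α] (f : α → ℝ)
    (hf : ∀ x, 0 ≤ f x) (s : Finset ι) (t : ι → Finset α) :
    ∑ x ∈ s.biUnion t, f x ≤ ∑ i ∈ s, ∑ x ∈ t i, f x := by
  classical
  induction s using Finset.induction with
  | empty => simp
  | @insert a s h ih =>
    rw [Finset.biUnion_insert, Finset.sum_insert h]
    have h1 : ∑ x ∈ t a ∪ s.biUnion t, f x + ∑ x ∈ t a ∩ s.biUnion t, f x
        = ∑ x ∈ t a, f x + ∑ x ∈ s.biUnion t, f x := Finset.sum_union_inter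
    have h2 : 0 ≤ ∑ x ∈ t a ∩ s.biUnion t, f x := Finset.sum_nonneg fun x _ => hf x
    linarith

/-- (Berman's main lemma.)  Let `G` carry positive weights `w`, let
`A ⊆ V`, and let `C = {v} ∪ T` be a claw with centre `v ∈ A` and talons `T`
(an independent set of neighbours of `v`).  If for every `u ∈ T` the vertex `v` is a
maximum-weight `A`-neighbour of `u`, every charge `w(u) − ½w(u,A)` is positive, and
the charges sum to more than `½w(v)`, then `∑_{u∈T} w(u)² > ∑_{t∈N(T)∩A} w(t)²`:
the talons improve the squared weight of `A`. -/
theorem stmt_13 {V : Type*} [DecidableEq V] (G : SimpleGraph V) [DecidableRel G.Adj]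
    (w : V → ℝ) (hw : ∀ v, 0 < w v) (A : Finset V)
    (v : V) (hv : v ∈ A) (T : Finset V)
    (hclaw : ∀ u ∈ T, G.Adj v u)
    (hind : ∀ a ∈ T, ∀ b ∈ T, a ≠ b → ¬ G.Adj a b)
    (hmax : ∀ u ∈ T, ∀ t ∈ A.filter (fun t => G.Adj u t), w t ≤ w v)
    (hpos : ∀ u ∈ T, 0 < w u - (∑ t ∈ A.filter (fun t => G.Adj u t), w t) / 2)
    (hsum : w v / 2 < ∑ u ∈ T, (w u - (∑ t ∈ A.filter (fun t => G.Adj u t), w t) / 2)) :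
    ∑ t ∈ A.filter (fun t => ∃ u ∈ T, G.Adj u t), (w t) ^ 2 < ∑ u ∈ T, (w u) ^ 2 := by
  classical
  set S : V → Finset V := fun u => A.filter (fun t => G.Adj u t) with hS
  set N : Finset V := A.filter (fun t => ∃ u ∈ T, G.Adj u t) with hN
  have hvS : ∀ u ∈ T, v ∈ S u := fun u hu =>
    Finset.mem_filter.mpr ⟨hv, (hclaw u hu).symm⟩
  have hTne : T.Nonempty := by
    rcases T.eq_empty_or_nonempty with h | h
    · exfalso; rw [h] at hsum; simp at hsum; linarith [hw v]
    · exact h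
  obtain ⟨u₀, hu₀⟩ := hTne
  have hvN : v ∈ N := Finset.mem_filter.mpr ⟨hv, u₀, hu₀, (hclaw u₀ hu₀).symm⟩
  have hwle : ∀ t ∈ N, w t ≤ w v := by
    intro t ht
    obtain ⟨htA, u, hu, hadj⟩ := Finset.mem_filter.mp ht
    exact hmax u hu t (Finset.mem_filter.mpr ⟨htA, hadj⟩)
  -- Step 1: ∑_{t∈N} w t ≤ w v + ∑_{u∈T} (∑_{t∈S u} w t - w v)
  have step1 : ∑ t ∈ N, w t ≤ w v + ∑ u ∈ T, (∑ t ∈ S u, w t - w v) := by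
    have hsub : N.erase v ⊆ T.biUnion (fun u => (S u).erase v) := by
      intro t ht
      obtain ⟨htne, htN⟩ := Finset.mem_erase.mp ht
      obtain ⟨htA, u, hu, hadj⟩ := Finset.mem_filter.mp htN
      exact Finset.mem_biUnion.mpr ⟨u, hu,
        Finset.mem_erase.mpr ⟨htne, Finset.mem_filter.mpr ⟨htA, hadj⟩⟩⟩
    have h1 : ∑ t ∈ N.erase v, w t ≤ ∑ t ∈ T.biUnion (fun u => (S u).erase v), w t :=
      Finset.sum_le_sum_of_subset_of_nonneg hsub (fun t _ _ => (hw t).le)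
    have h2 : ∑ t ∈ T.biUnion (fun u => (S u).erase v), w t
        ≤ ∑ u ∈ T, ∑ t ∈ (S u).erase v, w t :=
      sum_biUnion_le_aux w (fun t => (hw t).le) T _
    have h3 : ∀ u ∈ T, ∑ t ∈ (S u).erase v, w t = ∑ t ∈ S u, w t - w v := by
      intro u hu
      rw [Finset.sum_erase_eq_sub (hvS u hu)]
    have h4 : ∑ t ∈ N, w t = w v + ∑ t ∈ N.erase v, w t :=
      (Finset.add_sum_erase _ _ hvN).symm
    have h5 : ∑ u ∈ T, ∑ t ∈ (S u).erase v, w t = ∑ u ∈ T, (∑ t ∈ S u, w t - w v) :=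
      Finset.sum_congr rfl h3
    rw [h4, ← h5]; linarith
  -- Step 2: ∑_{u∈T} ∑_{t∈S u} w t < 2 ∑ w u - w v
  have step2 : ∑ u ∈ T, ∑ t ∈ S u, w t < 2 * (∑ u ∈ T, w u) - w v := by
    have := hsum
    rw [Finset.sum_sub_distrib] at this
    have hdiv : ∑ u ∈ T, (∑ t ∈ S u, w t) / 2 = (∑ u ∈ T, ∑ t ∈ S u, w t) / 2 := by
      rw [Finset.sum_div]
    rw [hdiv] at this
    linarith
  -- Combine: ∑_{t∈N} w t < 2 ∑ w u - |T| * w v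
  have step3 : ∑ t ∈ N, w t < 2 * (∑ u ∈ T, w u) - (T.card : ℝ) * w v := by
    have hc : ∑ u ∈ T, (∑ t ∈ S u, w t - w v)
        = (∑ u ∈ T, ∑ t ∈ S u, w t) - (T.card : ℝ) * w v := by
      rw [Finset.sum_sub_distrib, Finset.sum_const, nsmul_eq_mul]
    have hc1 : (1 : ℝ) ≤ T.card := by
      exact_mod_cast Finset.card_pos.mpr ⟨u₀, hu₀⟩
    rw [hc] at step1
    linarith
  -- ∑_{t∈N} w t ^ 2 ≤ w v * ∑_{t∈N} w t
  have step4 : ∑ t ∈ N, (w t) ^ 2 ≤ w v * ∑ t ∈ N, w t := by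
    rw [Finset.mul_sum]
    apply Finset.sum_le_sum
    intro t ht
    have := hwle t ht
    nlinarith [hw t]
  -- final
  have step5 : ∀ u ∈ T, 2 * w v * w u - w v * w v ≤ (w u) ^ 2 := by
    intro u hu; nlinarith [sq_nonneg (w u - w v)]
  have step6 : ∑ u ∈ T, (2 * w v * w u - w v * w v) ≤ ∑ u ∈ T, (w u) ^ 2 :=
    Finset.sum_le_sum step5
  have hexp : ∑ u ∈ T, (2 * w v * w u - w v * w v)
      = 2 * w v * (∑ u ∈ T, w u) - (T.card : ℝ) * (w v * w v) := by
    rw [Finset.sum_sub_distrib, Finset.mul_sum, Finset.sum_const, nsmul_eq_mul]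
  have hwv := hw v
  nlinarith [step3, step4, step6, hexp]
end

section
/- Let A be an independent set in a k-claw free graph G with positive weights w, such that no 'good claw' with respect to A exists (in particular every vertex outside A has a neighbor in A, and for every v ∈ A, Σ_{u∈N(v)∩A*} charge(u,v) ≤ ½·w(v) for every independent set A*). Then for every independent set A* in G, w(A*) ≤ (k/2)·w(A). -/
/-- (Berman, Lemma 1.)  Let `A` be an independent set in a
`k`-claw free graph `G` with positive weights `w` such that no good claw with respect
to `A` exists: every vertex outside `A` has a maximum-weight `A`-neighbour
`nmax u`, and for every `v ∈ A` and every independent set `B`,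
`∑_{u∈N(v)∩B} charge(u,v) ≤ ½·w(v)`, where
`charge(u,v) = w(u) − ½·w(u,A)` if `v = nmax u` and `0` otherwise.
Then `w(A*) ≤ (k/2)·w(A)` for every independent set `A*`. -/
theorem stmt_15 {V : Type*} [DecidableEq V] (G : SimpleGraph V) [DecidableRel G.Adj]
    (k : ℕ) (hk : 2 ≤ k)
    (hclawfree : ∀ v : V, ∀ T : Finset V, (∀ t ∈ T, G.Adj v t) →
      (∀ a ∈ T, ∀ b ∈ T, a ≠ b → ¬ G.Adj a b) → T.card ≤ k - 1)
    (w : V → ℝ) (hw : ∀ v, 0 < w v)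
    (A : Finset V) (hAind : ∀ a ∈ A, ∀ b ∈ A, a ≠ b → ¬ G.Adj a b)
    (nmax : V → V)
    (hnmax : ∀ u, u ∉ A → nmax u ∈ A ∧ G.Adj u (nmax u) ∧
      ∀ t ∈ A, G.Adj u t → w t ≤ w (nmax u))
    (charge : V → V → ℝ)
    (hcharge : ∀ u v, charge u v =
      if v = nmax u then w u - (∑ t ∈ A.filter (fun t => G.Adj u t), w t) / 2 else 0)
    (hnogood : ∀ v ∈ A, ∀ B : Finset V,
      (∀ a ∈ B, ∀ b ∈ B, a ≠ b → ¬ G.Adj a b) →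
      ∑ u ∈ B.filter (fun u => G.Adj v u), charge u v ≤ w v / 2) :
    ∀ Astar : Finset V, (∀ a ∈ Astar, ∀ b ∈ Astar, a ≠ b → ¬ G.Adj a b) →
      ∑ a ∈ Astar, w a ≤ (k / 2 : ℝ) * ∑ a ∈ A, w a := by
  intro Astar hstar
  set S := Astar \ A with hS
  have hSsub : S ⊆ Astar := Finset.sdiff_subset
  have hSind : ∀ a ∈ S, ∀ b ∈ S, a ≠ b → ¬ G.Adj a b :=
    fun a ha b hb => hstar a (hSsub ha) b (hSsub hb)
  have hnA : ∀ u ∈ S, u ∉ A := fun u hu => (Finset.mem_sdiff.mp hu).2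
  have hnmaxS : ∀ u ∈ S, nmax u ∈ A \ Astar := by
    intro u hu
    obtain ⟨h1, h2, _⟩ := hnmax u (hnA u hu)
    refine Finset.mem_sdiff.mpr ⟨h1, fun hmem => ?_⟩
    exact hstar u (hSsub hu) (nmax u) hmem (fun h => (hnA u hu) (h ▸ h1)) h2
  -- the weight of each u in S splits into charge plus half its A-neighbourhood weight
  have hsplit : ∑ u ∈ S, w u =
      (∑ u ∈ S, charge u (nmax u)) +
      (∑ u ∈ S, ∑ t ∈ A.filter (fun t => G.Adj u t), w t) / 2 := by
    rw [Finset.sum_div, ← Finset.sum_add_distrib]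
    refine Finset.sum_congr rfl fun u hu => ?_
    rw [hcharge, if_pos rfl]; ring
  -- bound on the total charge
  have hchargebound : ∑ u ∈ S, charge u (nmax u) ≤ ∑ v ∈ A \ Astar, w v / 2 := by
    have h1 : ∀ u ∈ S, charge u (nmax u) = ∑ v ∈ A \ Astar, charge u v := by
      intro u hu
      have : ∑ v ∈ A \ Astar, charge u v
          = ∑ v ∈ A \ Astar, (if v = nmax u then
            w u - (∑ t ∈ A.filter (fun t => G.Adj u t), w t) / 2 else 0) :=
        Finset.sum_congr rfl fun v _ => hcharge u v
      rw [this, Finset.sum_ite_eq' (A \ Astar) (nmax u), if_pos (hnmaxS u hu),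
        hcharge, if_pos rfl]
    rw [Finset.sum_congr rfl h1, Finset.sum_comm]
    refine Finset.sum_le_sum fun v hv => ?_
    have hvA : v ∈ A := (Finset.mem_sdiff.mp hv).1
    have hfil : ∑ u ∈ S.filter (fun u => G.Adj v u), charge u v = ∑ u ∈ S, charge u v := by
      refine Finset.sum_filter_of_ne fun u hu hne => ?_
      by_contra hadj
      apply hne
      rw [hcharge]
      rw [if_neg]
      intro hveq
      exact hadj (hveq ▸ (hnmax u (hnA u hu)).2.1.symm)
    rw [← hfil]
    exact hnogood v hvA S hSind
  -- bound on the half-neighbourhood weights via claw-freeness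
  have hnbrbound : ∑ u ∈ S, ∑ t ∈ A.filter (fun t => G.Adj u t), w t ≤
      ((k : ℝ) - 1) * ∑ t ∈ A \ Astar, w t := by
    have hswap : ∑ u ∈ S, ∑ t ∈ A.filter (fun t => G.Adj u t), w t
        = ∑ t ∈ A, ((S.filter (fun u => G.Adj u t)).card : ℝ) * w t := by
      have : ∀ u ∈ S, ∑ t ∈ A.filter (fun t => G.Adj u t), w t
          = ∑ t ∈ A, (if G.Adj u t then w t else 0) :=
        fun u _ => Finset.sum_filter _ _
      rw [Finset.sum_congr rfl this, Finset.sum_comm]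
      refine Finset.sum_congr rfl fun t _ => ?_
      rw [← Finset.sum_filter, Finset.sum_const, nsmul_eq_mul]
    rw [hswap]
    have hpt : ∀ t ∈ A, ((S.filter (fun u => G.Adj u t)).card : ℝ) * w t ≤
        (if t ∉ Astar then ((k : ℝ) - 1) * w t else 0) := by
      intro t ht
      by_cases hts : t ∈ Astar
      · rw [if_neg (by simpa using hts)]
        have : S.filter (fun u => G.Adj u t) = ∅ := by
          refine Finset.filter_eq_empty_iff.mpr fun u hu => ?_
          have hne : u ≠ t := fun h => (hnA u hu) (h ▸ ht)
          exact hstar u (hSsub hu) t hts hne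
        simp [this]
      · rw [if_pos hts]
        have hcard : (S.filter (fun u => G.Adj u t)).card ≤ k - 1 := by
          refine hclawfree t _ (fun u hu => ((Finset.mem_filter.mp hu).2).symm) ?_
          intro a ha b hb hab
          exact hSind a (Finset.mem_filter.mp ha).1 b (Finset.mem_filter.mp hb).1 hab
        have hcast : ((S.filter (fun u => G.Adj u t)).card : ℝ) ≤ (k : ℝ) - 1 := by
          have := (Nat.cast_le (α := ℝ)).mpr hcard
          rwa [Nat.cast_sub (by omega), Nat.cast_one] at this
        exact mul_le_mul_of_nonneg_right hcast (le_of_lt (hw t))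
    calc ∑ t ∈ A, ((S.filter (fun u => G.Adj u t)).card : ℝ) * w t
        ≤ ∑ t ∈ A, (if t ∉ Astar then ((k : ℝ) - 1) * w t else 0) :=
          Finset.sum_le_sum hpt
      _ = ∑ t ∈ A.filter (fun t => t ∉ Astar), ((k : ℝ) - 1) * w t := by
          rw [Finset.sum_filter]
      _ = ((k : ℝ) - 1) * ∑ t ∈ A \ Astar, w t := by
          rw [Finset.sdiff_eq_filter, Finset.mul_sum]
  -- combine everything
  have hX : (0 : ℝ) ≤ ∑ a ∈ A ∩ Astar, w a :=
    Finset.sum_nonneg fun a _ => le_of_lt (hw a)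
  have hZ : (0 : ℝ) ≤ ∑ a ∈ A \ Astar, w a :=
    Finset.sum_nonneg fun a _ => le_of_lt (hw a)
  have hAstar : ∑ a ∈ Astar, w a = (∑ a ∈ A ∩ Astar, w a) + ∑ u ∈ S, w u := by
    rw [hS, ← Finset.sum_inter_add_sum_sdiff Astar A, Finset.inter_comm]
  have hA : ∑ a ∈ A, w a = (∑ a ∈ A ∩ Astar, w a) + ∑ a ∈ A \ Astar, w a :=
    (Finset.sum_inter_add_sum_sdiff A Astar w).symm
  have hk2 : (2 : ℝ) ≤ (k : ℝ) := by exact_mod_cast hk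
  have hZsum : ∑ v ∈ A \ Astar, w v / 2 = (∑ a ∈ A \ Astar, w a) / 2 := by
    rw [Finset.sum_div]
  rw [hAstar, hA]
  rw [hZsum] at hchargebound
  nlinarith [hsplit, hchargebound, hnbrbound, hX, hZ]
end
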